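/- arXiv:1912.08982 — 5 statements merged into one kernel-verified Lean document; each statement's English description precedes it below -/
import Mathlib

section
/- Let p ≥ 3 be odd and l ≥ 1 an integer. Then the following identities hold in the Laurent polynomial ring ℤ[t, t⁻¹]: (i) for q = lp + 2, (t^{pq} − 1)(t − 1) = (t^p − 1)(t^q − 1) · [1 + (t − 1)(Σ_{i=1}^{p−1} Σ_{j=0}^{li−1} t^{pj+2i} + Σ_{i=1}^{(p−1)/2} t^{2i−1})]; (ii) for q = lp − 2, (t^{pq} − 1)(t − 1) = (t^p − 1)(t^q − 1) · [1 + (t − 1)(Σ_{i=1}^{p−1} Σ_{j=1}^{li−1} t^{pj−2i} − Σ_{i=1}^{(p−1)/2} t^{−2i+1})]. In particular, the Alexander polynomial Δ_{T(p,q)}(t) = (t^{pq} − 1)(t − 1)/((t^p − 1)(t^q − 1)) of the (p, q) torus knot admits these closed forms. -/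
open LaurentPolynomial

open Finset

private abbrev R15 := LaurentPolynomial ℤ

private lemma geom15 (n : ℤ) (m : ℕ) :
    (T n - 1 : R15) * ∑ j ∈ range m, T (n * j) = T (n * m) - 1 := by
  induction m with
  | zero => simp
  | succ k ih =>
    rw [sum_range_succ, mul_add, ih]
    have h : n * ((k : ℤ) + 1) = n + n * k := by ring
    push_cast
    rw [h, T_add, sub_mul, one_mul]
    ring

private lemma sumIcc15 (f : ℕ → R15) (n : ℕ) :
    ∑ i ∈ Icc 1 n, f i = ∑ i ∈ range n, f (i + 1) := by
  induction n with
  | zero => simp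
  | succ k ih => rw [sum_Icc_succ_top (by omega), ih, sum_range_succ]

private lemma rangeSucc15 (f : ℕ → R15) (n : ℕ) :
    ∑ k ∈ range (n + 1), f k = f 0 + ∑ i ∈ Icc 1 n, f i := by
  rw [sum_range_succ', sumIcc15, add_comm]

private lemma geomIcc15 (n : ℤ) (m : ℕ) :
    (T n - 1 : R15) * ∑ j ∈ Icc 1 m, T (n * j) = T (n * ((m : ℤ) + 1)) - T n := by
  rw [sumIcc15 (fun j => T (n * j)) m]
  have h1 : ∀ j : ℕ, (T (n * ((j : ℤ) + 1)) : R15) = T n * T (n * j) := by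
    intro j
    rw [← T_add]
    ring_nf
  calc (T n - 1 : R15) * ∑ j ∈ range m, T (n * ((j : ℕ) + 1 : ℕ))
      = T n * ((T n - 1) * ∑ j ∈ range m, T (n * j)) := by
        push_cast
        simp only [h1]
        rw [← mul_sum]
        ring
    _ = T n * (T (n * m) - 1) := by rw [geom15]
    _ = T (n * ((m : ℤ) + 1)) - T n := by
        rw [mul_sub, ← T_add, mul_one]
        congr 2
        ring

private lemma sumOddEven15 (m : ℕ) :
    ∑ k ∈ range (2 * m + 1), (T (k : ℤ) : R15) =
      1 + ∑ i ∈ range m, (T (2 * (i : ℤ) + 1) + T (2 * (i : ℤ) + 2)) := by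
  induction m with
  | zero => simp
  | succ k ih =>
    have h : 2 * (k + 1) + 1 = (2 * k + 1) + 1 + 1 := by ring
    rw [h, sum_range_succ, sum_range_succ, ih, sum_range_succ,
      show ((2 * k + 1 : ℕ) : ℤ) = 2 * (k : ℤ) + 1 by push_cast; ring,
      show ((2 * k + 1 + 1 : ℕ) : ℤ) = 2 * (k : ℤ) + 2 by push_cast; ring]
    ring

private lemma mainAux15 (p : ℕ) (q : ℤ) (S : R15)
    (hS : ∑ k ∈ range p, (T (q * k) : R15) =
        ∑ k ∈ range p, T (k : ℤ) + (T (p : ℤ) - 1) * S) :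
    (T ((p : ℤ) * q) - 1) * (T 1 - 1) =
      (T (p : ℤ) - 1) * (T q - 1) * (1 + (T 1 - 1) * S) := by
  have E1 : (T ((p : ℤ) * q) - 1 : R15) = (T q - 1) * ∑ k ∈ range p, T (q * k) := by
    rw [geom15, mul_comm (p : ℤ) q]
  have E2 : (T (p : ℤ) - 1 : R15) = (T 1 - 1) * ∑ k ∈ range p, T (k : ℤ) := by
    have := geom15 1 p
    simpa using this.symm
  rw [E1, hS, E2]
  ring

private lemma hS115 (m l : ℕ) :
    ∑ k ∈ range (2 * m + 1), (T (((l : ℤ) * ((2 * m + 1 : ℕ) : ℤ) + 2) * k) : R15) =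
      ∑ k ∈ range (2 * m + 1), T (k : ℤ) +
        (T ((2 * m + 1 : ℕ) : ℤ) - 1) *
          ((∑ i ∈ Icc 1 (2 * m), ∑ j ∈ range (l * i),
              T (((2 * m + 1 : ℕ) : ℤ) * j + 2 * i)) +
            ∑ i ∈ Icc 1 m, T (2 * (i : ℤ) - 1)) := by
  have hA : ∀ i ∈ Icc 1 (2 * m),
      (T ((2 * m + 1 : ℕ) : ℤ) - 1 : R15) *
        ∑ j ∈ range (l * i), T (((2 * m + 1 : ℕ) : ℤ) * j + 2 * i) =
      T (((l : ℤ) * ((2 * m + 1 : ℕ) : ℤ) + 2) * i) - T (2 * i) := by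
    intro i _
    calc (T ((2 * m + 1 : ℕ) : ℤ) - 1 : R15) *
          ∑ j ∈ range (l * i), T (((2 * m + 1 : ℕ) : ℤ) * j + 2 * i)
        = ((T ((2 * m + 1 : ℕ) : ℤ) - 1) *
            ∑ j ∈ range (l * i), T (((2 * m + 1 : ℕ) : ℤ) * j)) * T (2 * i) := by
          simp only [T_add, ← sum_mul]
          ring
      _ = (T (((2 * m + 1 : ℕ) : ℤ) * ((l * i : ℕ) : ℤ)) - 1) * T (2 * i) := by
          rw [geom15]
      _ = T (((l : ℤ) * ((2 * m + 1 : ℕ) : ℤ) + 2) * i) - T (2 * i) := by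
          rw [sub_mul, ← T_add, one_mul]
          congr 2
          push_cast
          ring
  have hB : ∀ i ∈ Icc 1 m,
      (T ((2 * m + 1 : ℕ) : ℤ) - 1 : R15) * T (2 * (i : ℤ) - 1) =
      T (((2 * m + 1 : ℕ) : ℤ) + (2 * (i : ℤ) - 1)) - T (2 * (i : ℤ) - 1) := by
    intro i _
    rw [sub_mul, ← T_add, one_mul]
  rw [mul_add, mul_sum, Finset.sum_congr rfl hA, mul_sum, Finset.sum_congr rfl hB,
    rangeSucc15]
  simp only [sumIcc15]
  simp only [sum_sub_distrib]
  have e1 : ∑ i ∈ range (2 * m), (T (2 * ((i + 1 : ℕ) : ℤ)) : R15) =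
      ∑ i ∈ range m, T (2 * (i : ℤ) + 2) +
        ∑ i ∈ range m, T (((2 * m + 1 : ℕ) : ℤ) + (2 * ((i + 1 : ℕ) : ℤ) - 1)) := by
    rw [two_mul m, sum_range_add]
    congr 1
    all_goals exact Finset.sum_congr rfl (fun i _ => congrArg T (by push_cast; ring))
  have e2 : ∑ i ∈ range m, (T (2 * ((i + 1 : ℕ) : ℤ) - 1) : R15) =
      ∑ i ∈ range m, T (2 * (i : ℤ) + 1) :=
    Finset.sum_congr rfl (fun i _ => congrArg T (by push_cast; ring))
  have e3 : (T (((l : ℤ) * ((2 * m + 1 : ℕ) : ℤ) + 2) * ((0 : ℕ) : ℤ)) : R15) = 1 := by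
    rw [show ((l : ℤ) * ((2 * m + 1 : ℕ) : ℤ) + 2) * ((0 : ℕ) : ℤ) = 0 by push_cast; ring,
      T_zero]
  have e4 := sumOddEven15 m
  rw [sum_add_distrib] at e4
  rw [e1, e2, e3, e4]
  ring

private lemma hS215 (m l : ℕ) (hl : 1 ≤ l) :
    ∑ k ∈ range (2 * m + 1), (T (((l : ℤ) * ((2 * m + 1 : ℕ) : ℤ) - 2) * k) : R15) =
      ∑ k ∈ range (2 * m + 1), T (k : ℤ) +
        (T ((2 * m + 1 : ℕ) : ℤ) - 1) *
          ((∑ i ∈ Icc 1 (2 * m), ∑ j ∈ Icc 1 (l * i - 1),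
              T (((2 * m + 1 : ℕ) : ℤ) * j - 2 * i)) -
            ∑ i ∈ Icc 1 m, T (-2 * (i : ℤ) + 1)) := by
  have hA : ∀ i ∈ Icc 1 (2 * m),
      (T ((2 * m + 1 : ℕ) : ℤ) - 1 : R15) *
        ∑ j ∈ Icc 1 (l * i - 1), T (((2 * m + 1 : ℕ) : ℤ) * j - 2 * i) =
      T (((l : ℤ) * ((2 * m + 1 : ℕ) : ℤ) - 2) * i) -
        T (((2 * m + 1 : ℕ) : ℤ) - 2 * i) := by
    intro i hi
    have hi1 : 1 ≤ i := (mem_Icc.mp hi).1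
    have hli : 1 ≤ l * i := by
      calc 1 = 1 * 1 := by norm_num
        _ ≤ l * i := Nat.mul_le_mul hl hi1
    have hc : ((l * i - 1 : ℕ) : ℤ) + 1 = ((l * i : ℕ) : ℤ) := by omega
    calc (T ((2 * m + 1 : ℕ) : ℤ) - 1 : R15) *
          ∑ j ∈ Icc 1 (l * i - 1), T (((2 * m + 1 : ℕ) : ℤ) * j - 2 * i)
        = ((T ((2 * m + 1 : ℕ) : ℤ) - 1) *
            ∑ j ∈ Icc 1 (l * i - 1), T (((2 * m + 1 : ℕ) : ℤ) * j)) * T (-(2 * i)) := by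
          simp only [sub_eq_add_neg, T_add, ← sum_mul]
          ring
      _ = (T (((2 * m + 1 : ℕ) : ℤ) * (((l * i - 1 : ℕ) : ℤ) + 1)) -
            T ((2 * m + 1 : ℕ) : ℤ)) * T (-(2 * i)) := by
          rw [geomIcc15]
      _ = T (((l : ℤ) * ((2 * m + 1 : ℕ) : ℤ) - 2) * i) -
            T (((2 * m + 1 : ℕ) : ℤ) - 2 * i) := by
          rw [sub_mul, ← T_add, ← T_add, hc,
            show ((2 * m + 1 : ℕ) : ℤ) * ((l * i : ℕ) : ℤ) + -(2 * (i : ℤ)) =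
              ((l : ℤ) * ((2 * m + 1 : ℕ) : ℤ) - 2) * i by push_cast; ring,
            show ((2 * m + 1 : ℕ) : ℤ) + -(2 * (i : ℤ)) =
              ((2 * m + 1 : ℕ) : ℤ) - 2 * i by ring]
  have hB : ∀ i ∈ Icc 1 m,
      (T ((2 * m + 1 : ℕ) : ℤ) - 1 : R15) * T (-2 * (i : ℤ) + 1) =
      T (((2 * m + 1 : ℕ) : ℤ) + (-2 * (i : ℤ) + 1)) - T (-2 * (i : ℤ) + 1) := by
    intro i _
    rw [sub_mul, ← T_add, one_mul]
  rw [mul_sub, mul_sum, Finset.sum_congr rfl hA, mul_sum, Finset.sum_congr rfl hB,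
    rangeSucc15]
  simp only [sumIcc15]
  simp only [sum_sub_distrib]
  have e1 : ∑ i ∈ range (2 * m), (T (((2 * m + 1 : ℕ) : ℤ) - 2 * ((i + 1 : ℕ) : ℤ)) : R15) =
      ∑ i ∈ range m, T (2 * (i : ℤ) + 1) +
        ∑ i ∈ range m, T (-2 * ((i + 1 : ℕ) : ℤ) + 1) := by
    rw [two_mul m, sum_range_add]
    congr 1
    · rw [← sum_range_reflect (fun i => (T (2 * (i : ℤ) + 1) : R15)) m]
      exact Finset.sum_congr rfl (fun i hi =>
        congrArg T (by rw [mem_range] at hi; omega))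
    · exact Finset.sum_congr rfl (fun i _ => congrArg T (by push_cast; ring))
  have e2 : ∑ i ∈ range m,
      (T (((2 * m + 1 : ℕ) : ℤ) + (-2 * ((i + 1 : ℕ) : ℤ) + 1)) : R15) =
      ∑ i ∈ range m, T (2 * (i : ℤ) + 2) := by
    rw [← sum_range_reflect (fun i => (T (2 * (i : ℤ) + 2) : R15)) m]
    exact Finset.sum_congr rfl (fun i hi =>
      congrArg T (by rw [mem_range] at hi; omega))
  have e3 : (T (((l : ℤ) * ((2 * m + 1 : ℕ) : ℤ) - 2) * ((0 : ℕ) : ℤ)) : R15) = 1 := by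
    rw [show ((l : ℤ) * ((2 * m + 1 : ℕ) : ℤ) - 2) * ((0 : ℕ) : ℤ) = 0 by push_cast; ring,
      T_zero]
  have e4 := sumOddEven15 m
  rw [sum_add_distrib] at e4
  rw [e1, e2, e3, e4]
  ring


/-- Closed forms for the Alexander polynomial
`Δ_{T(p,q)}(t) = (t^{pq} − 1)(t − 1)/((t^p − 1)(t^q − 1))` of torus knots,
expressed as polynomial identities in `ℤ[t, t⁻¹]`:
(i) for `q = lp + 2`:
`(t^{pq} − 1)(t − 1) = (t^p − 1)(t^q − 1)·[1 + (t − 1)(Σ_{i=1}^{p−1} Σ_{j=0}^{li−1} t^{pj+2i} + Σ_{i=1}^{(p−1)/2} t^{2i−1})]`;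
(ii) for `q = lp − 2`:
`(t^{pq} − 1)(t − 1) = (t^p − 1)(t^q − 1)·[1 + (t − 1)(Σ_{i=1}^{p−1} Σ_{j=1}^{li−1} t^{pj−2i} − Σ_{i=1}^{(p−1)/2} t^{−2i+1})]`. -/
theorem statement15 (p l : ℕ) (hp : 3 ≤ p) (hodd : Odd p) (hl : 1 ≤ l) :
    ((T ((p : ℤ) * ((l : ℤ) * p + 2)) - 1) * (T 1 - 1) =
      (T (p : ℤ) - 1) * (T ((l : ℤ) * p + 2) - 1) *
        (1 + (T 1 - 1) *
          ((∑ i ∈ Finset.Icc 1 (p - 1), ∑ j ∈ Finset.range (l * i),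
              T ((p : ℤ) * j + 2 * i)) +
            ∑ i ∈ Finset.Icc 1 ((p - 1) / 2), T (2 * (i : ℤ) - 1)) :
          LaurentPolynomial ℤ)) ∧
    ((T ((p : ℤ) * ((l : ℤ) * p - 2)) - 1) * (T 1 - 1) =
      (T (p : ℤ) - 1) * (T ((l : ℤ) * p - 2) - 1) *
        (1 + (T 1 - 1) *
          ((∑ i ∈ Finset.Icc 1 (p - 1), ∑ j ∈ Finset.Icc 1 (l * i - 1),
              T ((p : ℤ) * j - 2 * i)) -
            ∑ i ∈ Finset.Icc 1 ((p - 1) / 2), T (-2 * (i : ℤ) + 1)) :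
          LaurentPolynomial ℤ)) := by
  obtain ⟨m, hm⟩ := hodd
  subst hm
  rw [show 2 * m + 1 - 1 = 2 * m by omega, show 2 * m / 2 = m by omega]
  exact ⟨mainAux15 (2 * m + 1) ((l : ℤ) * ((2 * m + 1 : ℕ) : ℤ) + 2) _ (hS115 m l),
    mainAux15 (2 * m + 1) ((l : ℤ) * ((2 * m + 1 : ℕ) : ℤ) - 2) _ (hS215 m l hl)⟩
end

section
/- Let p ≥ 3 be odd and l ≥ 1 an integer, and let Δ_{T(p,q)}(t) = (t^{pq} − 1)(t − 1)/((t^p − 1)(t^q − 1)) ∈ ℤ[t, t⁻¹]. Then the sum of the absolute values of the coefficients of Δ_{T(p,q)} equals ((p − 1)/2)·((p + 1)l + 2) + 1 when q = lp + 2, and equals ((p − 1)/2)·((p + 1)l − 2) − 1 when q = lp − 2. -/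
/-!
Write `E` for the set of gaps of the numerical semigroup `⟨p, q⟩`. Multiplying
`(1 - t) · ∑_{s ∈ ⟨p,q⟩} t^s = 1 + (t - 1) · ∑_{n ∈ E} t^n` by `(t^p - 1)(t^q - 1)` gives
`(t^{pq} - 1)(t - 1)`, so this is `Δ_{T(p,q)}`. Its coefficients lie in `{-1, 0, 1}` and are
nonzero exactly at `0`, at the first element of each maximal run of consecutive gaps, and just
after the last one; hence the coefficient-norm is `1 + 2 · #(runs of E)`.

The gaps congruent to `r` modulo `p` are `r, r + p, …, r + p (ν r - 1)` with `ν r = ⌊jq/p⌋` for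
the `j < p` with `jq ≡ r`. A run ends at `r + pk` exactly when `r + 1 + pk` is not a gap, i.e.
when `k ≥ ν (r + 1)` (the class of `p - 1` is followed by that of `0`, which has no gaps), so the
number of runs is `∑_{r < p - 1} (ν r - ν (r + 1))⁺ + ν (p - 1)`. For `q = lp ± 2` the function
`ν` is explicit on even and odd residues, and the sum is evaluated in closed form.
-/

open LaurentPolynomial Finset

namespace TorusKnot

lemma mul_sum_T_mul (a : ℤ) (n : ℕ) :
    (T a - 1) * ∑ k ∈ range n, (T (a * k) : LaurentPolynomial ℤ) = T (a * n) - 1 := by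
  simp_rw [mul_comm a, ← T_pow, mul_geom_sum]

lemma T_sub_one_ne_zero {n : ℤ} (hn : n ≠ 0) : (T n : LaurentPolynomial ℤ) - 1 ≠ 0 := by
  intro h
  have := congrArg (fun f : LaurentPolynomial ℤ => f.coeff n) h
  simp [← T_zero, T_apply, hn.symm] at this

lemma sum_range_two_mul {M : Type*} [AddCommMonoid M] (f : ℕ → M) (m : ℕ) :
    ∑ r ∈ range (2 * m), f r = ∑ i ∈ range m, (f (2 * i) + f (2 * i + 1)) := by
  induction m with
  | zero => simp
  | succ m ih =>
    rw [mul_add, mul_one, sum_range_succ, sum_range_succ, sum_range_succ, ih, add_assoc]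

lemma bijOn_range_of_injOn {p : ℕ} {σ : ℕ → ℕ} (hmaps : ∀ j < p, σ j < p)
    (hinj : ∀ j < p, ∀ j' < p, σ j = σ j' → j = j') :
    Set.BijOn σ (range p) (range p) :=
  ((range p).finite_toSet.injOn_iff_bijOn_of_mapsTo
      fun j hj => mem_range.2 (hmaps j (mem_range.1 hj))).1
    fun j hj j' hj' => hinj j (mem_range.1 hj) j' (mem_range.1 hj')

def coeffNorm (f : LaurentPolynomial ℤ) : ℤ := ∑ n ∈ f.coeff.support, |f.coeff n|

noncomputable def gapPoly (E : Finset ℤ) : LaurentPolynomial ℤ := 1 + (T 1 - 1) * ∑ n ∈ E, T n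

lemma coeff_gapPoly (E : Finset ℤ) (n : ℤ) :
    (gapPoly E).coeff n =
      (if n = 0 then 1 else 0) + (if n - 1 ∈ E then 1 else 0) - (if n ∈ E then 1 else 0) := by
  have h : gapPoly E = 1 + ∑ m ∈ E, T (m + 1) - ∑ m ∈ E, T m := by
    simp only [gapPoly, sub_mul, one_mul, mul_sum, ← T_add, add_comm (1 : ℤ), sum_sub_distrib]
    ring
  have hshift : ∀ m : ℤ, m + 1 = n ↔ m = n - 1 := fun m => by omega
  simp [h, AddMonoidAlgebra.coeff_sum, ← T_zero, T_apply, hshift, eq_comm (a := n)]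

lemma card_filter_sub_one_notMem (E : Finset ℤ) :
    #{n ∈ E | n - 1 ∉ E} = #{n ∈ E | n + 1 ∉ E} := by
  have hshift : #{n ∈ E | n - 1 ∈ E} = #{n ∈ E | n + 1 ∈ E} := by
    refine card_nbij' (· - 1) (· + 1) ?_ ?_ (fun _ _ => by simp) (fun _ _ => by simp) <;>
      intro n hn <;> simp_all
  have h₁ := card_filter_add_card_filter_not (s := E) (fun n => n - 1 ∈ E)
  have h₂ := card_filter_add_card_filter_not (s := E) (fun n => n + 1 ∈ E)
  omega

lemma coeffNorm_eq_card {f : LaurentPolynomial ℤ} {S : Finset ℤ}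
    (hf : ∀ n, |f.coeff n| = if n ∈ S then 1 else 0) : coeffNorm f = #S := by
  have hsupp : f.coeff.support = S := by
    ext n
    rw [Finsupp.mem_support_iff, ← abs_ne_zero, hf]
    split_ifs <;> simp_all
  rw [coeffNorm, hsupp, sum_congr rfl fun n hn => (hf n).trans (if_pos hn), sum_const,
    nsmul_one]

lemma coeffNorm_gapPoly {E : Finset ℤ} (hE : ∀ n ∈ E, 0 < n) :
    coeffNorm (gapPoly E) = 1 + 2 * #{n ∈ E | n + 1 ∉ E} := by
  set starts := {n ∈ E | n - 1 ∉ E}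
  set stops := {n ∈ E | n + 1 ∉ E}.map (addRightEmbedding 1)
  have hE0 : (0 : ℤ) ∉ E := fun h => (hE 0 h).false
  have hEm1 : (-1 : ℤ) ∉ E := fun h => by linarith [hE _ h]
  have hdisj : Disjoint starts stops := by
    simp only [starts, stops, disjoint_left, mem_filter, mem_map, addRightEmbedding_apply]
    rintro _ ⟨hn, -⟩ ⟨m, ⟨-, hm⟩, rfl⟩
    exact hm hn
  have h0 : (0 : ℤ) ∉ starts ∪ stops := by
    simp only [starts, stops, mem_union, mem_filter, mem_map, addRightEmbedding_apply]
    rintro (⟨h, -⟩ | ⟨m, ⟨hm, -⟩, hm0⟩)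
    · exact hE0 h
    · exact hEm1 (by rwa [show m = -1 by omega] at hm)
  have habs : ∀ n, |(gapPoly E).coeff n| = if n ∈ insert 0 (starts ∪ stops) then 1 else 0 := by
    intro n
    have hstops : n ∈ stops ↔ n - 1 ∈ E ∧ n ∉ E := by
      simp only [stops, mem_map, mem_filter, addRightEmbedding_apply]
      constructor
      · rintro ⟨m, hm, rfl⟩
        simpa using hm
      · rintro ⟨h₁, h₂⟩
        exact ⟨n - 1, by simpa using And.intro h₁ h₂, by ring⟩
    simp only [coeff_gapPoly, mem_insert, mem_union, hstops]
    by_cases hn : n = 0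
    · simp [hn, hE0, hEm1]
    · by_cases h₁ : n - 1 ∈ E <;> by_cases h₂ : n ∈ E <;> simp [starts, hn, h₁, h₂]
  rw [coeffNorm_eq_card habs, card_insert_of_notMem h0, card_union_of_disjoint hdisj, card_map,
    card_filter_sub_one_notMem]
  push_cast
  ring

def staircase (p : ℕ) (ν : ℕ → ℕ) : Finset ℤ :=
  (range p).biUnion fun r => (range (ν r)).image fun k => ((r + p * k : ℕ) : ℤ)

section Staircase

variable {p : ℕ} {ν : ℕ → ℕ}

lemma eq_of_add_mul_eq (hp : 0 < p) {r r' k k' : ℕ} (hr : r < p) (hr' : r' < p)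
    (h : r + p * k = r' + p * k') : r = r' ∧ k = k' := by
  obtain ⟨hk, hrr⟩ := (Nat.div_mod_unique hp).2 ⟨h, hr⟩
  obtain ⟨hk', hrr'⟩ := (Nat.div_mod_unique hp).2 ⟨rfl, hr'⟩
  exact ⟨hrr.symm.trans hrr', hk.symm.trans hk'⟩

lemma add_mul_mem_staircase_iff (hp : 0 < p) {r : ℕ} (hr : r < p) (k : ℕ) :
    ((r + p * k : ℕ) : ℤ) ∈ staircase p ν ↔ k < ν r := by
  simp only [staircase, mem_biUnion, mem_range, mem_image, Nat.cast_inj]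
  constructor
  · rintro ⟨r', hr', k', hk', h⟩
    obtain ⟨rfl, rfl⟩ := eq_of_add_mul_eq hp hr' hr h
    exact hk'
  · exact fun hk => ⟨r, hr, k, hk, rfl⟩

lemma pos_of_mem_staircase (hν₀ : ν 0 = 0) {n : ℤ} (hn : n ∈ staircase p ν) : 0 < n := by
  simp only [staircase, mem_biUnion, mem_range, mem_image] at hn
  obtain ⟨r, -, k, hk, rfl⟩ := hn
  rcases Nat.eq_zero_or_pos r with rfl | hr
  · rw [hν₀] at hk
    exact absurd hk (Nat.not_lt_zero k)
  · positivity

lemma pairwiseDisjoint_staircase_rows (hp : 0 < p) :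
    (range p : Set ℕ).PairwiseDisjoint
      fun r => (range (ν r)).image fun k => ((r + p * k : ℕ) : ℤ) := by
  intro r hr r' hr' hne
  simp only [Function.onFun, disjoint_left, mem_image, mem_range]
  rintro _ ⟨k, -, rfl⟩ ⟨k', -, h⟩
  exact hne (eq_of_add_mul_eq hp (mem_range.1 hr') (mem_range.1 hr) (Nat.cast_injective h)).1.symm

lemma injective_staircase_row (hp : 0 < p) (r : ℕ) :
    Function.Injective fun k : ℕ => ((r + p * k : ℕ) : ℤ) := fun k k' h => by
  simpa [hp.ne'] using h

lemma sum_staircase {M : Type*} [AddCommMonoid M] (hp : 0 < p) (f : ℤ → M) :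
    ∑ n ∈ staircase p ν, f n = ∑ r ∈ range p, ∑ k ∈ range (ν r), f ((r + p * k : ℕ) : ℤ) := by
  rw [staircase, sum_biUnion (pairwiseDisjoint_staircase_rows hp)]
  exact sum_congr rfl fun r _ => sum_image fun k _ k' _ h => injective_staircase_row hp r h

lemma card_filter_succ_notMem_staircase (hp : 0 < p) (hν₀ : ν 0 = 0) :
    #{n ∈ staircase p ν | n + 1 ∉ staircase p ν} =
      ∑ r ∈ range (p - 1), (ν r - ν (r + 1)) + ν (p - 1) := by
  rw [staircase, filter_biUnion, card_biUnion fun r hr r' hr' hne =>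
      disjoint_filter_filter (pairwiseDisjoint_staircase_rows hp hr hr' hne),
    ← staircase, show range p = range (p - 1 + 1) by rw [Nat.sub_add_cancel hp], sum_range_succ]
  simp_rw [filter_image, card_image_of_injective _ (injective_staircase_row hp _)]
  congr 1
  · refine sum_congr rfl fun r hr => ?_
    have hr : r + 1 < p := by rw [mem_range] at hr; omega
    have hrow : ∀ k, ((r + p * k : ℕ) : ℤ) + 1 = ((r + 1 + p * k : ℕ) : ℤ) := fun k => by
      push_cast; ring
    simp_rw [hrow, add_mul_mem_staircase_iff hp hr, not_lt]
    rw [← Nat.card_Ico]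
    congr 1
    ext k
    simp only [mem_filter, mem_range, mem_Ico]
    tauto
  · have hrow : ∀ k, ((p - 1 + p * k : ℕ) : ℤ) + 1 = ((0 + p * (k + 1) : ℕ) : ℤ) := fun k => by
      push_cast [Nat.cast_sub hp]; ring
    simp_rw [hrow, add_mul_mem_staircase_iff hp hp, hν₀, Nat.not_lt_zero, not_false_eq_true,
      filter_true, card_range]

lemma gapPoly_staircase_identity (hp : 0 < p) (q : ℕ) {σ : ℕ → ℕ}
    (hσ : Set.BijOn σ (range p) (range p)) (hν : ∀ j < p, σ j + p * ν (σ j) = j * q) :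
    (T (p : ℤ) - 1) * (T (q : ℤ) - 1) * gapPoly (staircase p ν) =
      (T ((p : ℤ) * q) - 1) * (T 1 - 1) := by
  have hS := mul_sum_T_mul 1 p
  have hQ := mul_sum_T_mul q p
  simp only [one_mul] at hS
  rw [mul_comm (q : ℤ) p] at hQ
  have hrows : (T (p : ℤ) - 1) * ∑ n ∈ staircase p ν, (T n : LaurentPolynomial ℤ) =
      ∑ j ∈ range p, T ((q : ℤ) * j) - ∑ r ∈ range p, T (r : ℤ) := by
    have hrow : ∀ r, (T (p : ℤ) - 1) *
        ∑ k ∈ range (ν r), (T ((r + p * k : ℕ) : ℤ) : LaurentPolynomial ℤ) =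
        T ((r + p * ν r : ℕ) : ℤ) - T (r : ℤ) := fun r => by
      have h := mul_sum_T_mul p (ν r)
      simp only [Nat.cast_add, Nat.cast_mul, T_add, ← mul_sum]
      linear_combination T (r : ℤ) * h
    have hperm : ∑ r ∈ range p, (T ((r + p * ν r : ℕ) : ℤ) : LaurentPolynomial ℤ) =
        ∑ j ∈ range p, T ((q : ℤ) * j) :=
      (sum_nbij σ hσ.mapsTo hσ.injOn hσ.surjOn fun j hj => by
        rw [hν j (mem_range.1 hj)]; push_cast; ring_nf).symm
    rw [sum_staircase hp, mul_sum, sum_congr rfl fun r _ => hrow r, sum_sub_distrib, hperm]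
  rw [gapPoly]
  linear_combination (T (q : ℤ) - 1) * (T 1 - 1) * hrows - (T (q : ℤ) - 1) * hS + (T 1 - 1) * hQ

lemma eq_gapPoly_staircase (hp : 0 < p) {q : ℕ} (hq : 0 < q) {σ : ℕ → ℕ}
    (hσ : Set.BijOn σ (range p) (range p)) (hν : ∀ j < p, σ j + p * ν (σ j) = j * q)
    {Δ : LaurentPolynomial ℤ}
    (hΔ : (T (p : ℤ) - 1) * (T (q : ℤ) - 1) * Δ = (T ((p : ℤ) * q) - 1) * (T 1 - 1)) :
    Δ = gapPoly (staircase p ν) :=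
  mul_left_cancel₀
    (mul_ne_zero (T_sub_one_ne_zero (by positivity)) (T_sub_one_ne_zero (by positivity)))
    (hΔ.trans (gapPoly_staircase_identity hp q hσ hν).symm)

lemma coeffNorm_eq_of_staircase (hp : 0 < p) {q : ℕ} (hq : 0 < q) {σ : ℕ → ℕ}
    (hσ : Set.BijOn σ (range p) (range p)) (hν : ∀ j < p, σ j + p * ν (σ j) = j * q)
    (hν₀ : ν 0 = 0) {Δ : LaurentPolynomial ℤ}
    (hΔ : (T (p : ℤ) - 1) * (T (q : ℤ) - 1) * Δ = (T ((p : ℤ) * q) - 1) * (T 1 - 1)) :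
    coeffNorm Δ = 1 + 2 * ((∑ r ∈ range (p - 1), (ν r - ν (r + 1)) + ν (p - 1) : ℕ) : ℤ) := by
  rw [eq_gapPoly_staircase hp hq hσ hν hΔ, coeffNorm_gapPoly fun n => pos_of_mem_staircase hν₀,
    card_filter_succ_notMem_staircase hp hν₀]

end Staircase

section Plus

variable (m l : ℕ)

/- With `p = 2m + 1` and `q = lp + 2`: `residuePlus m j = jq mod p` (it is `2j mod p`), and
`gapCountPlus m l r = ⌊jq/p⌋` for the `j` with `jq ≡ r`, the number of gaps of `⟨p, q⟩` in the
residue class of `r`. -/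

def residuePlus (j : ℕ) : ℕ := if j ≤ m then 2 * j else 2 * j - (2 * m + 1)

def gapCountPlus (r : ℕ) : ℕ := if r % 2 = 0 then l * (r / 2) else l * (r / 2 + m + 1) + 1

lemma gapCountPlus_two_mul (i : ℕ) : gapCountPlus m l (2 * i) = l * i := by
  simp [gapCountPlus]

lemma gapCountPlus_two_mul_add_one (i : ℕ) :
    gapCountPlus m l (2 * i + 1) = l * (i + m + 1) + 1 := by
  simp [gapCountPlus, Nat.add_mod, show (2 * i + 1) / 2 = i by omega]

lemma bijOn_residuePlus : Set.BijOn (residuePlus m) (range (2 * m + 1)) (range (2 * m + 1)) :=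
  bijOn_range_of_injOn (fun j hj => by unfold residuePlus; split_ifs <;> omega)
    fun j hj j' hj' h => by unfold residuePlus at h; split_ifs at h <;> omega

lemma residuePlus_add_mul {j : ℕ} (hj : j < 2 * m + 1) :
    residuePlus m j + (2 * m + 1) * gapCountPlus m l (residuePlus m j) =
      j * (l * (2 * m + 1) + 2) := by
  rcases le_or_gt j m with hjm | hjm
  · rw [residuePlus, if_pos hjm, gapCountPlus_two_mul]
    ring
  · obtain ⟨i, rfl⟩ := Nat.exists_eq_add_of_lt hjm
    rw [show residuePlus m (m + i + 1) = 2 * i + 1 by unfold residuePlus; split_ifs <;> omega,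
      gapCountPlus_two_mul_add_one]
    ring

lemma sum_gapCountPlus :
    ∑ r ∈ range (2 * m), (gapCountPlus m l r - gapCountPlus m l (r + 1)) +
        gapCountPlus m l (2 * m) =
      m * (l * m + 1) + l * m := by
  rw [sum_range_two_mul, gapCountPlus_two_mul]
  have hpair : ∀ i, gapCountPlus m l (2 * i) - gapCountPlus m l (2 * i + 1) +
      (gapCountPlus m l (2 * i + 1) - gapCountPlus m l (2 * i + 1 + 1)) = l * m + 1 := fun i => by
    rw [show 2 * i + 1 + 1 = 2 * (i + 1) by ring, gapCountPlus_two_mul, gapCountPlus_two_mul,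
      gapCountPlus_two_mul_add_one]
    simp only [mul_add, mul_one]
    omega
  simp [hpair]

lemma coeffNorm_alexander_plus {p : ℕ} (hpm : p = 2 * m + 1) {Δ : LaurentPolynomial ℤ}
    (hΔ : (T (p : ℤ) - 1) * (T ((l : ℤ) * p + 2) - 1) * Δ =
      (T ((p : ℤ) * ((l : ℤ) * p + 2)) - 1) * (T 1 - 1)) :
    coeffNorm Δ = 2 * m * (l * (m + 1) + 1) + 1 := by
  have hq : ((l * p + 2 : ℕ) : ℤ) = l * p + 2 := by push_cast; ring
  rw [← hq] at hΔ
  subst hpm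
  rw [coeffNorm_eq_of_staircase (by omega) (by omega) (bijOn_residuePlus m)
      (fun j hj => residuePlus_add_mul m l hj) (gapCountPlus_two_mul m l 0) hΔ,
    Nat.add_sub_cancel, sum_gapCountPlus]
  push_cast
  ring

end Plus

section Minus

variable (m l : ℕ)

/- With `p = 2m + 1` and `q = lp - 2`: `residueMinus m j = jq mod p` (it is `-2j mod p`), and
`gapCountMinus m l r = ⌊jq/p⌋` for the `j` with `jq ≡ r`. -/

def residueMinus (j : ℕ) : ℕ :=
  if j = 0 then 0 else if j ≤ m then 2 * m + 1 - 2 * j else 2 * (2 * m + 1) - 2 * j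

def gapCountMinus (r : ℕ) : ℕ :=
  if r = 0 then 0 else if r % 2 = 1 then l * (m - r / 2) - 1 else l * (2 * m + 1 - r / 2) - 2

lemma gapCountMinus_zero : gapCountMinus m l 0 = 0 := rfl

lemma gapCountMinus_two_mul_add_one (i : ℕ) :
    gapCountMinus m l (2 * i + 1) = l * (m - i) - 1 := by
  simp [gapCountMinus, Nat.add_mod, show (2 * i + 1) / 2 = i by omega]

lemma gapCountMinus_two_mul_add_two (i : ℕ) :
    gapCountMinus m l (2 * i + 2) = l * (2 * m - i) - 2 := by
  simp [gapCountMinus, show (2 * i + 2) / 2 = i + 1 by omega,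
    show 2 * m + 1 - (i + 1) = 2 * m - i by omega]

lemma bijOn_residueMinus : Set.BijOn (residueMinus m) (range (2 * m + 1)) (range (2 * m + 1)) :=
  bijOn_range_of_injOn (fun j hj => by unfold residueMinus; split_ifs <;> omega)
    fun j hj j' hj' h => by unfold residueMinus at h; split_ifs at h <;> omega

lemma residueMinus_add_mul {j : ℕ} (hj : j < 2 * m + 1) (hl : 1 ≤ l) :
    residueMinus m j + (2 * m + 1) * gapCountMinus m l (residueMinus m j) =
      j * (l * (2 * m + 1) - 2) := by
  rcases Nat.eq_zero_or_pos j with rfl | hj0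
  · simp [residueMinus, gapCountMinus]
  have h₂ : 2 ≤ l * (2 * m + 1) := by nlinarith
  rcases le_or_gt j m with hjm | hjm
  · obtain ⟨i, rfl⟩ := Nat.exists_eq_add_of_le hjm
    rw [show residueMinus (j + i) j = 2 * i + 1 by unfold residueMinus; split_ifs <;> omega,
      gapCountMinus_two_mul_add_one, Nat.add_sub_cancel]
    have h₁ : 1 ≤ l * j := Nat.mul_pos (by omega) hj0
    zify [h₁, h₂]
    ring
  · obtain ⟨a, i, rfl, rfl⟩ : ∃ a i, m = a + i + 1 ∧ j = a + 2 * i + 2 :=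
      ⟨m - (j - m), j - m - 1, by omega, by omega⟩
    rw [show residueMinus (a + i + 1) (a + 2 * i + 2) = 2 * a + 2 by
        unfold residueMinus; split_ifs <;> omega,
      gapCountMinus_two_mul_add_two, show 2 * (a + i + 1) - a = a + 2 * i + 2 by omega]
    have h₁ : 2 ≤ l * (a + 2 * i + 2) := by nlinarith
    zify [h₁, h₂]
    ring

lemma gapCountMinus_odd_le_even {i : ℕ} (hi : i < m) (hl : 1 ≤ l) :
    gapCountMinus m l (2 * i + 1) ≤ gapCountMinus m l (2 * i + 2) := by
  rw [gapCountMinus_two_mul_add_one, gapCountMinus_two_mul_add_two,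
    show 2 * m - i = m + (m - i) by omega, mul_add]
  have : 1 ≤ l * m := Nat.mul_pos (by omega) (by omega)
  omega

lemma gapCountMinus_even_sub_odd {i : ℕ} (hi : i + 1 < m) (hl : 1 ≤ l) :
    gapCountMinus m l (2 * i + 2) - gapCountMinus m l (2 * i + 3) = l * (m + 1) - 1 := by
  rw [gapCountMinus_two_mul_add_two, show 2 * i + 3 = 2 * (i + 1) + 1 by ring,
    gapCountMinus_two_mul_add_one, show 2 * m - i = (m + 1) + (m - (i + 1)) by omega, mul_add]
  have : 1 ≤ l * (m - (i + 1)) := Nat.mul_pos (by omega) (by omega)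
  have : 2 ≤ l * (m + 1) := by nlinarith
  omega

lemma sum_gapCountMinus (hm : 1 ≤ m) (hl : 1 ≤ l) :
    ∑ r ∈ range (2 * m), (gapCountMinus m l r - gapCountMinus m l (r + 1)) +
        gapCountMinus m l (2 * m) =
      (m - 1) * (l * (m + 1) - 1) + (l * (m + 1) - 2) := by
  have hodd : ∀ i ∈ range m,
      gapCountMinus m l (2 * i + 1) - gapCountMinus m l (2 * i + 1 + 1) = 0 :=
    fun i hi => Nat.sub_eq_zero_of_le (gapCountMinus_odd_le_even m l (mem_range.1 hi) hl)
  obtain ⟨n, rfl⟩ : ∃ n, m = n + 1 := ⟨m - 1, by omega⟩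
  have heven : ∀ i ∈ range n, gapCountMinus (n + 1) l (2 * (i + 1)) -
      gapCountMinus (n + 1) l (2 * (i + 1) + 1) = l * (n + 1 + 1) - 1 := fun i hi =>
    gapCountMinus_even_sub_odd (n + 1) l (by simpa using hi) hl
  rw [sum_range_two_mul, sum_add_distrib, sum_congr rfl hodd, sum_range_succ', sum_congr rfl heven,
    show 2 * (n + 1) = 2 * n + 2 by ring, gapCountMinus_two_mul_add_two,
    show 2 * (n + 1) - n = n + 1 + 1 by omega]
  simp [gapCountMinus_zero]

lemma coeffNorm_alexander_minus {p : ℕ} (hpm : p = 2 * m + 1) (hm : 1 ≤ m) (hl : 1 ≤ l)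
    {Δ : LaurentPolynomial ℤ}
    (hΔ : (T (p : ℤ) - 1) * (T ((l : ℤ) * p - 2) - 1) * Δ =
      (T ((p : ℤ) * ((l : ℤ) * p - 2)) - 1) * (T 1 - 1)) :
    coeffNorm Δ = 2 * m * (l * (m + 1) - 1) - 1 := by
  have hlp : 3 ≤ l * p := by nlinarith
  have hq : ((l * p - 2 : ℕ) : ℤ) = l * p - 2 := by
    push_cast [Nat.cast_sub (by omega : 2 ≤ l * p)]
    ring
  rw [← hq] at hΔ
  subst hpm
  have hlm : 2 ≤ l * (m + 1) := by nlinarith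
  rw [coeffNorm_eq_of_staircase (by omega) (by omega) (bijOn_residueMinus m)
      (fun j hj => residueMinus_add_mul m l hj hl) (gapCountMinus_zero m l) hΔ,
    Nat.add_sub_cancel, sum_gapCountMinus m l hm hl]
  push_cast [Nat.cast_sub hm, Nat.cast_sub hlm, Nat.cast_sub (by omega : 1 ≤ l * (m + 1))]
  ring

end Minus

end TorusKnot

/-- For odd `p ≥ 3` and `l ≥ 1`, the sum of the absolute
values of the coefficients of the Alexander polynomial
`Δ_{T(p,q)} = (t^{pq} − 1)(t − 1)/((t^p − 1)(t^q − 1)) ∈ ℤ[t, t⁻¹]` of the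
`(p, q)` torus knot equals `((p − 1)/2)·((p + 1)l + 2) + 1` when `q = lp + 2`,
and `((p − 1)/2)·((p + 1)l − 2) − 1` when `q = lp − 2`.  (The polynomial `Δ` is
characterized implicitly by the identity `(t^p − 1)(t^q − 1)·Δ = (t^{pq} − 1)(t − 1)`.) -/
theorem statement16 (p l : ℕ) (hp : 3 ≤ p) (hodd : Odd p) (hl : 1 ≤ l) :
    (∀ Δ : LaurentPolynomial ℤ,
      (T (p : ℤ) - 1) * (T ((l : ℤ) * p + 2) - 1) * Δ =
          (T ((p : ℤ) * ((l : ℤ) * p + 2)) - 1) * (T 1 - 1) →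
      ∑ j ∈ (AddMonoidAlgebra.coeff Δ : ℤ →₀ ℤ).support, |(AddMonoidAlgebra.coeff Δ : ℤ →₀ ℤ) j| =
        ((p : ℤ) - 1) / 2 * (((p : ℤ) + 1) * l + 2) + 1) ∧
    (∀ Δ : LaurentPolynomial ℤ,
      (T (p : ℤ) - 1) * (T ((l : ℤ) * p - 2) - 1) * Δ =
          (T ((p : ℤ) * ((l : ℤ) * p - 2)) - 1) * (T 1 - 1) →
      ∑ j ∈ (AddMonoidAlgebra.coeff Δ : ℤ →₀ ℤ).support, |(AddMonoidAlgebra.coeff Δ : ℤ →₀ ℤ) j| =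
        ((p : ℤ) - 1) / 2 * (((p : ℤ) + 1) * l - 2) - 1) := by
  obtain ⟨m, hpm⟩ := hodd
  have hhalf : ((p : ℤ) - 1) / 2 = m := by omega
  refine ⟨fun Δ hΔ => ?_, fun Δ hΔ => ?_⟩
  · change TorusKnot.coeffNorm Δ = _
    rw [TorusKnot.coeffNorm_alexander_plus m l hpm hΔ, hhalf, hpm]
    push_cast
    ring
  · change TorusKnot.coeffNorm Δ = _
    rw [TorusKnot.coeffNorm_alexander_minus m l hpm (by omega) hl hΔ, hhalf, hpm]
    push_cast
    ring
end

section
/- Let p ≥ 3 be odd and k ≥ 1 an integer. Then B(p, 2kp + 2) = ((p − 1)/2)·(k(3p + 1) + 2)/2 and B(p, 2kp − 2) = ((p − 1)/2)·(k(3p + 1) − 4)/2. -/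
open Finset

/-- Closed form for `∑_{j<M} (q - (k(2j+1)+e))`. -/
lemma statement17_sum_aux (q k e : ℕ) : ∀ M : ℕ, (∀ j, j < M → k*(2*j+1)+e ≤ q) →
    ∑ j ∈ range M, (q - (k*(2*j+1)+e)) = M*q - (k*M*M + e*M) := by
  intro M
  induction M with
  | zero => simp
  | succ M ih =>
    intro h
    rw [Finset.sum_range_succ, ih (fun j hj => h j (by omega))]
    have h1 : k*(2*M+1)+e ≤ q := h M (by omega)
    have h2 : k*M*M + e*M ≤ M*q := by
      nlinarith [mul_le_mul_left h1 M, Nat.zero_le (k*M*M), Nat.zero_le (k*M)]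
    have h3 : k*(M+1)*(M+1) + e*(M+1) ≤ (M+1)*q := by nlinarith
    zify [h1, h2, h3]
    ring

/-- The lattice-point count
`B(p, q) = #{(m, n) : 1 ≤ m ≤ (p−1)/2, 1 ≤ n ≤ q−1, 1/2 ≤ m/p + n/q}`,
which computes the signature of the `(p, q)` torus knot via
`σ(T_{p,q}) = (p−1)(q−1) − 4·B(p,q)`. -/
noncomputable def Bcount (p q : ℕ) : ℕ :=
  Set.ncard {mn : ℕ × ℕ | 1 ≤ mn.1 ∧ mn.1 ≤ (p - 1) / 2 ∧ 1 ≤ mn.2 ∧ mn.2 ≤ q - 1 ∧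
    (1 : ℚ) / 2 ≤ (mn.1 : ℚ) / p + (mn.2 : ℚ) / q}

/-- If for each `1 ≤ m ≤ M` the condition `1/2 ≤ m/p + n/q` is equivalent to
`k(p-2m)+e ≤ n`, then `B(p,q)` has a closed form. -/
lemma statement17_Bcount_eq (p q M k e : ℕ) (hp : p = 2*M+1) (hq : 2 ≤ q)
    (hpos : ∀ m, 1 ≤ m → m ≤ M → 1 ≤ k*(p-2*m)+e)
    (hle : ∀ m, 1 ≤ m → m ≤ M → k*(p-2*m)+e ≤ q - 1)
    (hc : ∀ m n : ℕ, 1 ≤ m → m ≤ M → 1 ≤ n →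
       ((1:ℚ)/2 ≤ (m:ℚ)/p + (n:ℚ)/q ↔ k*(p-2*m)+e ≤ n)) :
    Bcount p q = M*q - (k*M*M + e*M) := by
  have hset : {mn : ℕ × ℕ | 1 ≤ mn.1 ∧ mn.1 ≤ (p - 1) / 2 ∧ 1 ≤ mn.2 ∧ mn.2 ≤ q - 1 ∧
      (1 : ℚ) / 2 ≤ (mn.1 : ℚ) / p + (mn.2 : ℚ) / q} =
      ↑((Icc 1 M ×ˢ Icc 1 (q-1)).filter
        (fun mn => (1:ℚ)/2 ≤ (mn.1:ℚ)/p + (mn.2:ℚ)/q)) := by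
    ext ⟨m, n⟩
    simp only [Set.mem_setOf_eq, coe_filter, Finset.mem_product, Finset.mem_Icc,
      Set.mem_setOf_eq]
    constructor
    · rintro ⟨h1, h2, h3, h4, h5⟩
      exact ⟨⟨⟨h1, by omega⟩, h3, h4⟩, h5⟩
    · rintro ⟨⟨⟨h1, h2⟩, h3, h4⟩, h5⟩
      exact ⟨h1, by omega, h3, h4, h5⟩
  rw [Bcount, hset, Set.ncard_coe_finset]
  rw [Finset.card_filter, Finset.sum_product]
  have hinner : ∀ m ∈ Icc 1 M,
      (∑ n ∈ Icc 1 (q-1), if (1:ℚ)/2 ≤ (m:ℚ)/p + (n:ℚ)/q then 1 else 0)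
        = q - (k*(p-2*m)+e) := by
    intro m hm
    rw [Finset.mem_Icc] at hm
    rw [← Finset.card_filter]
    have hfil : (Icc 1 (q-1)).filter (fun n : ℕ => (1:ℚ)/2 ≤ (m:ℚ)/p + (n:ℚ)/q)
        = Icc (k*(p-2*m)+e) (q-1) := by
      ext n
      simp only [mem_filter, mem_Icc]
      constructor
      · rintro ⟨⟨h1, h2⟩, h3⟩
        exact ⟨(hc m n hm.1 hm.2 h1).1 h3, h2⟩
      · rintro ⟨h1, h2⟩
        have hn1 : 1 ≤ n := le_trans (hpos m hm.1 hm.2) h1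
        exact ⟨⟨hn1, h2⟩, (hc m n hm.1 hm.2 hn1).2 h1⟩
    rw [hfil, Nat.card_Icc, Nat.sub_add_cancel (by omega : 1 ≤ q)]
  rw [Finset.sum_congr rfl hinner]
  rw [← Finset.Ico_add_one_right_eq_Icc, Finset.sum_Ico_eq_sum_range]
  have hM1 : M + 1 - 1 = M := by omega
  rw [hM1]
  rw [← Finset.sum_range_reflect]
  have hcg : ∀ j ∈ range M, (q - (k*(p - 2*(1+(M-1-j)))+e)) = q - (k*(2*j+1)+e) := by
    intro j hj
    simp only [mem_range] at hj
    congr 3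
    omega
  rw [Finset.sum_congr rfl hcg]
  apply statement17_sum_aux
  intro j hj
  have h1 := hle (M - j) (by omega) (by omega)
  have h2 : p - 2*(M-j) = 2*j+1 := by omega
  rw [h2] at h1
  omega

/-- The defining inequality of `Bcount` as an inequality of naturals. -/
lemma statement17_cond_iff (p q m n : ℕ) (hp : 0 < p) (hq : 0 < q) :
    ((1:ℚ)/2 ≤ (m:ℚ)/p + (n:ℚ)/q ↔ p*q ≤ (m*q + p*n)*2) := by
  have hp' : (0:ℚ) < (p:ℚ) := by exact_mod_cast hp
  have hq' : (0:ℚ) < (q:ℚ) := by exact_mod_cast hq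
  rw [div_add_div _ _ (ne_of_gt hp') (ne_of_gt hq'),
    div_le_div_iff₀ (by norm_num) (by positivity), one_mul]
  constructor
  · intro h
    exact_mod_cast h
  · intro h
    exact_mod_cast h

lemma statement17_case1_iff (p M k m n : ℕ) (hp : p = 2*M+1) (hm1 : 1 ≤ m) (hm2 : m ≤ M)
    (hk : 1 ≤ k) :
    (p*(2*k*p+2) ≤ (m*(2*k*p+2) + p*n)*2 ↔ k*(p-2*m)+1 ≤ n) := by
  zify [show 2*m ≤ p by omega]
  have hd1 : (1:ℤ) ≤ (p:ℤ) - 2*m := by omega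
  have hd2 : (p:ℤ) - 2*m ≤ (p:ℤ) - 2 := by omega
  have hk' : (1:ℤ) ≤ (k:ℤ) := by exact_mod_cast hk
  have hp' : (1:ℤ) ≤ (p:ℤ) := by exact_mod_cast (by omega : 1 ≤ p)
  constructor
  · intro h
    by_contra hn
    push_neg at hn
    have hn' : (n:ℤ) ≤ k*((p:ℤ)-2*m) := by omega
    nlinarith [mul_le_mul_of_nonneg_right hn' (by linarith : (0:ℤ) ≤ (p:ℤ))]
  · intro h
    nlinarith [mul_le_mul_of_nonneg_right h (by linarith : (0:ℤ) ≤ (p:ℤ))]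

lemma statement17_case2_iff (p M k m n : ℕ) (hp : p = 2*M+1) (hm1 : 1 ≤ m) (hm2 : m ≤ M)
    (hk : 1 ≤ k) :
    (p*(2*k*p-2) ≤ (m*(2*k*p-2) + p*n)*2 ↔ k*(p-2*m) ≤ n) := by
  have hkp : p ≤ k*p := Nat.le_mul_of_pos_left p hk
  zify [show 2*m ≤ p by omega, show 2 ≤ 2*k*p from by rw [mul_assoc]; omega]
  have hd1 : (1:ℤ) ≤ (p:ℤ) - 2*m := by omega
  have hd2 : (p:ℤ) - 2*m ≤ (p:ℤ) - 2 := by omega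
  have hk' : (1:ℤ) ≤ (k:ℤ) := by exact_mod_cast hk
  have hp' : (3:ℤ) ≤ (p:ℤ) := by exact_mod_cast (by omega : 3 ≤ p)
  constructor
  · intro h
    by_contra hn
    push_neg at hn
    have hn' : (n:ℤ) ≤ k*((p:ℤ)-2*m) - 1 := by omega
    nlinarith [mul_le_mul_of_nonneg_right hn' (by linarith : (0:ℤ) ≤ (p:ℤ))]
  · intro h
    nlinarith [mul_le_mul_of_nonneg_right h (by linarith : (0:ℤ) ≤ (p:ℤ))]

/-- For odd `p ≥ 3` and `k ≥ 1`:
`B(p, 2kp+2) = ((p−1)/2)·((k(3p+1)+2)/2)` and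
`B(p, 2kp−2) = ((p−1)/2)·((k(3p+1)−4)/2)` (all the divisions are exact). -/
theorem statement17 (p k : ℕ) (hp : 3 ≤ p) (hodd : Odd p) (hk : 1 ≤ k) :
    Bcount p (2 * k * p + 2) = (p - 1) / 2 * ((k * (3 * p + 1) + 2) / 2) ∧
    Bcount p (2 * k * p - 2) = (p - 1) / 2 * ((k * (3 * p + 1) - 4) / 2) := by
  obtain ⟨M, hpM⟩ : ∃ M, p = 2*M+1 := by
    obtain ⟨r, hr⟩ := hodd
    exact ⟨r, by omega⟩
  have hM : 1 ≤ M := by omega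
  have hkp : p ≤ k*p := Nat.le_mul_of_pos_left p hk
  have hp12 : (p - 1) / 2 = M := by omega
  constructor
  · -- q = 2kp + 2
    have hq2 : 2 ≤ 2*k*p+2 := by omega
    have hrw : Bcount p (2*k*p+2) = M*(2*k*p+2) - (k*M*M + 1*M) := by
      apply statement17_Bcount_eq p _ M k 1 hpM hq2
      · intro m h1 h2
        exact Nat.succ_le_succ (Nat.zero_le _)
      · intro m h1 h2
        have hb : k*(p-2*m) ≤ k*p := Nat.mul_le_mul_left k (Nat.sub_le p (2*m))
        obtain ⟨a, ha⟩ : ∃ a, k*p = a := ⟨_, rfl⟩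
        obtain ⟨b, hb2⟩ : ∃ b, k*(p-2*m) = b := ⟨_, rfl⟩
        rw [ha, hb2] at hb
        rw [ha] at hkp
        rw [mul_assoc, ha, hb2]
        omega
      · intro m n h1 h2 h3
        rw [statement17_cond_iff p _ m n (by omega) (by omega)]
        exact statement17_case1_iff p M k m n hpM h1 h2 hk
    rw [hrw, hp12]
    have e1 : (k*(3*p+1)+2)/2 = 3*k*M+2*k+1 := by
      have h1 : k*(3*p+1)+2 = 2*(3*k*M+2*k+1) := by subst hpM; ring
      rw [h1]
      exact Nat.mul_div_cancel_left _ (by norm_num)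
    rw [e1]
    have hbound : k*M*M + 1*M ≤ M*(2*k*p+2) := by
      subst hpM
      nlinarith [Nat.zero_le (k*M*M), Nat.zero_le (k*M)]
    zify [hbound]
    subst hpM
    push_cast
    ring
  · -- q = 2kp - 2
    obtain ⟨j, rfl⟩ : ∃ j, k = j+1 := ⟨k-1, by omega⟩
    have hassoc : 2*(j+1)*p = 2*((j+1)*p) := by ring
    have hq2 : 2 ≤ 2*(j+1)*p-2 := by
      obtain ⟨a, ha⟩ : ∃ a, (j+1)*p = a := ⟨_, rfl⟩
      rw [ha] at hkp
      rw [hassoc, ha]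
      omega
    have hqpos : 0 < 2*(j+1)*p-2 := by omega
    have hrw : Bcount p (2*(j+1)*p-2) = M*(2*(j+1)*p-2) - ((j+1)*M*M + 0*M) := by
      apply statement17_Bcount_eq p _ M (j+1) 0 hpM hq2
      · intro m h1 h2
        have hpos : 0 < (j+1)*(p-2*m) := Nat.mul_pos (by omega) (by omega)
        exact le_add_right hpos
      · intro m h1 h2
        have hb : (j+1)*(p-2*m) ≤ (j+1)*(p-2) := Nat.mul_le_mul_left _ (by omega)
        have hc2 : (j+1)*(p-2) + (j+1)*2 = (j+1)*p := by
          rw [← Nat.mul_add]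
          congr 1
          omega
        obtain ⟨a, ha⟩ : ∃ a, (j+1)*p = a := ⟨_, rfl⟩
        obtain ⟨b, hb2⟩ : ∃ b, (j+1)*(p-2*m) = b := ⟨_, rfl⟩
        obtain ⟨c, hc3⟩ : ∃ c, (j+1)*(p-2) = c := ⟨_, rfl⟩
        rw [ha] at hkp hc2
        rw [hb2] at hb
        rw [hc3] at hb hc2
        rw [hassoc, ha, hb2]
        omega
      · intro m n h1 h2 h3
        rw [statement17_cond_iff p _ m n (by omega) hqpos]
        exact statement17_case2_iff p M (j+1) m n hpM h1 h2 (by omega)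
    rw [hrw, hp12]
    have e1 : ((j+1)*(3*p+1)-4)/2 = 3*(j*M)+3*M+2*j := by
      have h1 : (j+1)*(3*p+1) = (6*(j*M)+6*M+4*j) + 4 := by subst hpM; ring
      rw [h1]
      obtain ⟨c, hc⟩ : ∃ c, j*M = c := ⟨_, rfl⟩
      rw [hc]
      omega
    rw [e1]
    have hA : 2*(j+1)*p - 2 = 4*j*M+4*M+2*j := by
      subst hpM
      have h2 : 2*(j+1)*(2*M+1) = (4*j*M+4*M+2*j) + 2 := by ring
      rw [h2, Nat.add_sub_cancel]
    rw [hA]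
    have hbound : (j+1)*M*M + 0*M ≤ M*(4*j*M+4*M+2*j) := by
      nlinarith [Nat.zero_le (j*M*M), Nat.zero_le (M*M), Nat.zero_le (j*M)]
    zify [hbound]
    ring
end

section
/- Let p ≥ 3 be odd and k ≥ 0 an integer. Then 8·B(p, (2k+1)p + 2) = (p − 1)·((2k+1)(3p+1) + 6) − 8·⌊p/4⌋ and 8·B(p, (2k+1)p − 2) = (p − 1)·((2k+1)(3p+1) − 10) + 8·⌊p/4⌋. -/
open Finset

lemma cond_iff {p q : ℕ} (m n : ℕ) (hp : 0 < p) (hq : 0 < q) :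
    ((1:ℚ)/2 ≤ (m:ℚ)/p + (n:ℚ)/q) ↔ p * q ≤ 2 * (m * q + n * p) := by
  have hp' : (0:ℚ) < p := by exact_mod_cast hp
  have hq' : (0:ℚ) < q := by exact_mod_cast hq
  rw [← Nat.cast_le (α := ℚ)]
  push_cast
  rw [div_add_div _ _ hp'.ne' hq'.ne', div_le_div_iff₀ two_pos (by positivity)]
  constructor <;> intro h <;> nlinarith

lemma c_lt_q {p q : ℕ} (m : ℕ) (hq : 1 ≤ q) (hp0 : 0 < p) :
    (q * (p - 2*m) - 1) / (2*p) < q := by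
  rw [Nat.div_lt_iff_lt_mul (by omega)]
  have h1 : q * (p - 2*m) ≤ q * p := Nat.mul_le_mul_left _ (Nat.sub_le _ _)
  have h2 : 0 < q * p := Nat.mul_pos hq hp0
  have h3 : q * (2*p) = 2 * (q * p) := by ring
  generalize q * (p - 2*m) = A at *
  generalize q * p = B at *
  omega

lemma inner_count {p q : ℕ} (m : ℕ) (hp : 3 ≤ p) (hq : 1 ≤ q) (hm : 1 ≤ m)
    (hm2 : m ≤ (p-1)/2) :
    ((Icc 1 (q-1)).filter (fun n => p * q ≤ 2 * (m * q + n * p))).card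
      = (q - 1) - (q * (p - 2*m) - 1) / (2*p) := by
  have h2m : 2*m + 1 ≤ p := by omega
  have hc : (q * (p - 2*m) - 1) / (2*p) < q := c_lt_q m hq (by omega)
  have hpos : 1 ≤ q * (p - 2*m) := Nat.one_le_iff_ne_zero.mpr
    (Nat.mul_ne_zero (by omega) (by omega))
  have hneg : (Icc 1 (q-1)).filter (fun n => ¬ (p * q ≤ 2 * (m * q + n * p)))
      = Icc 1 ((q * (p - 2*m) - 1) / (2*p)) := by
    ext n
    simp only [mem_filter, mem_Icc, not_le]
    have key : 2 * (m * q + n * p) < p * q ↔ n * (2*p) ≤ q * (p - 2*m) - 1 := by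
      have e1 : q * (p - 2*m) = q*p - q*(2*m) := Nat.mul_sub q p (2*m)
      have e2 : q*(2*m) ≤ q*p := Nat.mul_le_mul_left _ (by omega)
      have e3 : n*(2*p) = 2*(n*p) := by ring
      have e4 : p*q = q*p := Nat.mul_comm p q
      have e5 : 2*(m*q + n*p) = q*(2*m) + 2*(n*p) := by ring
      generalize q*(2*m) = A at *
      generalize q*p = B at *
      generalize n*p = C at *
      generalize m*q = D at *
      omega
    rw [Nat.le_div_iff_mul_le (by omega)]
    constructor
    · rintro ⟨⟨h1, _⟩, h3⟩
      exact ⟨h1, key.mp h3⟩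
    · rintro ⟨h1, h2⟩
      refine ⟨⟨h1, ?_⟩, key.mpr h2⟩
      have : n ≤ (q * (p - 2*m) - 1) / (2*p) := by
        rw [Nat.le_div_iff_mul_le (by omega)]; exact h2
      omega
  have := Finset.card_filter_add_card_filter_not
    (s := Icc 1 (q-1)) (p := fun n => p * q ≤ 2 * (m * q + n * p))
  rw [hneg] at this
  rw [Nat.card_Icc, Nat.card_Icc] at this
  generalize hC : (q * (p - 2*m) - 1) / (2*p) = C at *
  omega

lemma bcount_eq (p q : ℕ) (hp : 3 ≤ p) (hq : 1 ≤ q) :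
    Bcount p q = ∑ m ∈ Icc 1 ((p-1)/2), ((q-1) - (q * (p - 2*m) - 1) / (2*p)) := by
  classical
  have hset : {mn : ℕ × ℕ | 1 ≤ mn.1 ∧ mn.1 ≤ (p - 1) / 2 ∧ 1 ≤ mn.2 ∧ mn.2 ≤ q - 1 ∧
      (1 : ℚ) / 2 ≤ (mn.1 : ℚ) / p + (mn.2 : ℚ) / q}
      = ↑(((Icc 1 ((p-1)/2)) ×ˢ (Icc 1 (q-1))).filter
          (fun mn => p * q ≤ 2 * (mn.1 * q + mn.2 * p))) := by
    ext ⟨m, n⟩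
    simp only [Set.mem_setOf_eq, coe_filter, mem_product, mem_Icc]
    rw [cond_iff m n (by omega) hq]
    tauto
  rw [Bcount, hset, Set.ncard_coe_finset, Finset.card_filter, Finset.sum_product]
  refine Finset.sum_congr rfl fun m hm => ?_
  rw [← Finset.card_filter]
  simp only [mem_Icc] at hm
  exact inner_count m hp hq hm.1 hm.2

private lemma natDivHelper {a r t c : ℕ} (hc : 0 < c) (h : a = r + t * c) (hr : r < c) :
    a / c = t := by
  subst h
  rw [Nat.add_mul_div_right _ _ hc, Nat.div_eq_of_lt hr, Nat.zero_add]

lemma c_eval1 (p s k m : ℕ) (hp2 : p = 2*s+1) (h1 : 1 ≤ m) (h2 : m ≤ s) :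
    (((2*k+1)*p+2) * (p - 2*m) - 1) / (2*p)
      = (2*k+1)*(s-m) + k + (if 4*m < p then 1 else 0) := by
  subst hp2
  have hpos : 1 ≤ ((2*k+1)*(2*s+1)+2) * ((2*s+1) - 2*m) :=
    Nat.one_le_iff_ne_zero.mpr (Nat.mul_ne_zero (by omega) (by omega))
  by_cases h4 : 4*m < 2*s+1
  · rw [if_pos h4]
    refine natDivHelper (r := 2*s - 4*m) (by omega) ?_ (by omega)
    zify [hpos, (show 2*m ≤ 2*s+1 by omega), h2, (show 4*m ≤ 2*s by omega)]
    ring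
  · rw [if_neg h4]
    refine natDivHelper (r := 6*s + 2 - 4*m) (by omega) ?_ (by omega)
    zify [hpos, (show 2*m ≤ 2*s+1 by omega), h2, (show 4*m ≤ 6*s + 2 by omega)]
    ring

lemma c_eval2 (p s k m : ℕ) (hp2 : p = 2*s+1) (h1 : 1 ≤ m) (h2 : m ≤ s) :
    (((2*k+1)*p-2) * (p - 2*m) - 1) / (2*p)
      = (2*k+1)*(s-m) + k - (if 4*m < p then 1 else 0) := by
  subst hp2
  have hq3 : 3 ≤ (2*k+1)*(2*s+1) :=
    le_trans (by omega) (Nat.le_mul_of_pos_left (2*s+1) (by omega))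
  have hq1 : 1 ≤ (2*k+1)*(2*s+1) - 2 := by omega
  have hpos : 1 ≤ ((2*k+1)*(2*s+1)-2) * ((2*s+1) - 2*m) :=
    Nat.one_le_iff_ne_zero.mpr (Nat.mul_ne_zero (by omega) (by omega))
  by_cases h4 : 4*m < 2*s+1
  · rw [if_pos h4]
    have hsm : 1 ≤ s - m := by omega
    have ht1 : 1 ≤ (2*k+1)*(s-m) + k :=
      le_trans (le_trans hsm (Nat.le_mul_of_pos_left (s-m) (by omega))) (Nat.le_add_right _ _)
    refine natDivHelper (r := 2*s + 4*m) (by omega) ?_ (by omega)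
    zify [hpos, (show 2*m ≤ 2*s+1 by omega), h2, ht1, (show 2 ≤ (2*k+1)*(2*s+1) by omega)]
    ring
  · rw [if_neg h4, Nat.sub_zero]
    refine natDivHelper (r := 4*m - (2*s + 2)) (by omega) ?_ (by omega)
    zify [hpos, (show 2*m ≤ 2*s+1 by omega), h2, (show 2*s+2 ≤ 4*m by omega),
      (show 2 ≤ (2*k+1)*(2*s+1) by omega)]
    ring

lemma gauss (s : ℕ) (A B : ℤ) :
    (∑ m ∈ Icc 1 s, (A + B*(m:ℤ))) * 2 = (2*A + B*((s:ℤ)+1)) * s := by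
  induction s with
  | zero => simp
  | succ n ih =>
    rw [Finset.sum_Icc_succ_top (by omega)]
    push_cast
    push_cast at ih
    linear_combination ih

lemma ind_sum (s p : ℕ) (hp2 : p = 2*s+1) :
    (∑ m ∈ Icc 1 s, (if 4*m < p then (1:ℤ) else 0)) = ((p/4 : ℕ) : ℤ) := by
  subst hp2
  rw [Finset.sum_boole]
  have hf : (Icc 1 s).filter (fun m => 4*m < 2*s+1) = Icc 1 ((2*s+1)/4) := by
    ext n
    simp only [mem_filter, mem_Icc]
    omega
  rw [hf, Nat.card_Icc]
  simp

/-- **Statement 18.** For odd `p ≥ 3` and `k ≥ 0`: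
`8·B(p, (2k+1)p + 2) = (p − 1)·((2k+1)(3p+1) + 6) − 8·⌊p/4⌋` and
`8·B(p, (2k+1)p − 2) = (p − 1)·((2k+1)(3p+1) − 10) + 8·⌊p/4⌋`. -/
theorem statement18 (p k : ℕ) (hp : 3 ≤ p) (hodd : Odd p) :
    (8 * Bcount p ((2 * k + 1) * p + 2) : ℤ) =
      ((p : ℤ) - 1) * ((2 * (k : ℤ) + 1) * (3 * (p : ℤ) + 1) + 6) - 8 * ((p / 4 : ℕ) : ℤ) ∧
    (8 * Bcount p ((2 * k + 1) * p - 2) : ℤ) =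
      ((p : ℤ) - 1) * ((2 * (k : ℤ) + 1) * (3 * (p : ℤ) + 1) - 10) + 8 * ((p / 4 : ℕ) : ℤ) := by
  obtain ⟨s, hs⟩ := hodd
  have hp2 : p = 2*s+1 := by omega
  have hs1 : 1 ≤ s := by omega
  have hps : (p-1)/2 = s := by omega
  clear hs
  have hpc : (p:ℤ) = 2*(s:ℤ)+1 := by rw [hp2]; push_cast; ring
  constructor
  · -- q = (2k+1)p + 2
    have hq1 : 1 ≤ (2*k+1)*p + 2 := le_trans (by omega) (Nat.le_add_left 2 ((2*k+1)*p))
    obtain ⟨A, hA⟩ : ∃ A : ℤ,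
        A = 8*((((2*k+1)*p + 2 : ℕ) : ℤ)-1) - 8*(2*(k:ℤ)+1)*(s:ℤ) - 8*(k:ℤ) := ⟨_, rfl⟩
    obtain ⟨B, hB⟩ : ∃ B : ℤ, B = 8*(2*(k:ℤ)+1) := ⟨_, rfl⟩
    have hstep : ∀ m ∈ Icc 1 s,
        (8:ℤ) * ((((2*k+1)*p + 2) - 1 - (((2*k+1)*p + 2) * (p - 2*m) - 1) / (2*p) : ℕ) : ℤ)
        = (A + B * (m:ℤ)) - 8*(if 4*m < p then 1 else 0) := by
      intro m hm
      simp only [mem_Icc] at hm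
      have hcm := c_eval1 p s k m hp2 hm.1 hm.2
      have hlt : (((2*k+1)*p + 2) * (p - 2*m) - 1) / (2*p) < (2*k+1)*p + 2 :=
        c_lt_q m hq1 (by omega)
      rw [Nat.cast_sub (Nat.le_sub_one_of_lt hlt), hcm, hA, hB]
      split_ifs with h4
      · push_cast [Nat.cast_sub hm.2]
        ring
      · push_cast [Nat.cast_sub hm.2]
        ring
    have hmain : (8:ℤ) * ((Bcount p ((2*k+1)*p + 2) : ℕ) : ℤ)
        = (∑ m ∈ Icc 1 s, ((A + B * (m:ℤ)) - 8*(if 4*m < p then 1 else 0))) := by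
      rw [bcount_eq p ((2*k+1)*p + 2) (by omega) hq1, hps, Nat.cast_sum, Finset.mul_sum]
      exact Finset.sum_congr rfl hstep
    rw [Finset.sum_sub_distrib, ← Finset.mul_sum, ind_sum s p hp2] at hmain
    have hg := gauss s A B
    have h16 : (16:ℤ) * ((Bcount p ((2*k+1)*p + 2) : ℕ) : ℤ)
        = (2*A + B*((s:ℤ)+1))*(s:ℤ) - 16*((p/4 : ℕ) : ℤ) := by linarith [hmain, hg]
    subst hA; subst hB
    push_cast at h16 ⊢
    rw [hpc] at h16 ⊢
    linarith [h16]
  · -- q = (2k+1)p - 2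
    have hq3 : 3 ≤ (2*k+1)*p := le_trans hp (Nat.le_mul_of_pos_left p (by omega))
    have hq1 : 1 ≤ (2*k+1)*p - 2 := by omega
    obtain ⟨A, hA⟩ : ∃ A : ℤ,
        A = 8*((((2*k+1)*p - 2 : ℕ) : ℤ)-1) - 8*(2*(k:ℤ)+1)*(s:ℤ) - 8*(k:ℤ) := ⟨_, rfl⟩
    obtain ⟨B, hB⟩ : ∃ B : ℤ, B = 8*(2*(k:ℤ)+1) := ⟨_, rfl⟩
    have hstep : ∀ m ∈ Icc 1 s,
        (8:ℤ) * ((((2*k+1)*p - 2) - 1 - (((2*k+1)*p - 2) * (p - 2*m) - 1) / (2*p) : ℕ) : ℤ)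
        = (A + B * (m:ℤ)) + 8*(if 4*m < p then 1 else 0) := by
      intro m hm
      simp only [mem_Icc] at hm
      have hcm := c_eval2 p s k m hp2 hm.1 hm.2
      have hlt : (((2*k+1)*p - 2) * (p - 2*m) - 1) / (2*p) < (2*k+1)*p - 2 :=
        c_lt_q m hq1 (by omega)
      have h2q : 2 ≤ (2*k+1)*p := by omega
      rw [Nat.cast_sub (Nat.le_sub_one_of_lt hlt), hcm, hA, hB,
        Nat.cast_sub hq1, Nat.cast_sub h2q]
      split_ifs with h4
      · have hsm : 1 ≤ s - m := by omega
        have ht1 : 1 ≤ (2*k+1)*(s-m) + k :=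
          le_trans (le_trans hsm (Nat.le_mul_of_pos_left (s-m) (by omega)))
            (Nat.le_add_right _ _)
        rw [Nat.cast_sub ht1]
        push_cast [Nat.cast_sub hm.2]
        ring
      · rw [Nat.sub_zero]
        push_cast [Nat.cast_sub hm.2]
        ring
    have hmain : (8:ℤ) * ((Bcount p ((2*k+1)*p - 2) : ℕ) : ℤ)
        = (∑ m ∈ Icc 1 s, ((A + B * (m:ℤ)) + 8*(if 4*m < p then 1 else 0))) := by
      rw [bcount_eq p ((2*k+1)*p - 2) (by omega) hq1, hps, Nat.cast_sum, Finset.mul_sum]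
      exact Finset.sum_congr rfl hstep
    rw [Finset.sum_add_distrib, ← Finset.mul_sum, ind_sum s p hp2] at hmain
    have hg := gauss s A B
    have h16 : (16:ℤ) * ((Bcount p ((2*k+1)*p - 2) : ℕ) : ℤ)
        = (2*A + B*((s:ℤ)+1))*(s:ℤ) + 16*((p/4 : ℕ) : ℤ) := by linarith [hmain, hg]
    subst hA; subst hB
    push_cast [Nat.cast_sub (show 2 ≤ (2*k+1)*p by omega)] at h16 ⊢
    rw [hpc] at h16 ⊢
    linarith [h16]
end

section
/- Let R be an integral domain with field of fractions K, and let C̃ be an S-complex over R. Then the Frøyshov invariant is unchanged under base change to the field of fractions: h(C̃ ⊗_R K) = h(C̃), where C̃ ⊗_R K is the S-complex over K obtained by tensoring C and all structure maps with K. -/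
/-!  S-complexes over a commutative ring `R` (following Daemi–Scaduto).

An S-complex is a ℤ-graded finitely generated free chain complex
`C̃ = C ⊕ C[1] ⊕ R` determined by the data of `C` together with maps
`d, v, δ₁, δ₂`.  We encode the graded module `C` by a single module `Tot`
together with an internal ℤ-grading by submodules, and we carry the sign
map `ε` (multiplication by `(-1)^i` on the degree `i` part) as data. -/

universe u

/-- The data of an S-complex over `R`: a module `Tot` (the total module of the
ℤ-graded module `C_*`), its grading, the sign map `ε`, and the structure maps
`d : C_* → C_{*-1}`, `v : C_* → C_{*-2}`, `δ₁ : C_* → R` (supported in degree 1),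
`δ₂ : R → C_{-2}`. -/
structure SComplexData (R : Type u) [CommRing R] where
  Tot : Type u
  [acg : AddCommGroup Tot]
  [mod : Module R Tot]
  grading : ℤ → Submodule R Tot
  sign : Tot →ₗ[R] Tot
  d : Tot →ₗ[R] Tot
  v : Tot →ₗ[R] Tot
  δ₁ : Tot →ₗ[R] R
  δ₂ : R →ₗ[R] Tot

attribute [instance] SComplexData.acg SComplexData.mod

namespace SComplexData

variable {R : Type u} [CommRing R]

/-- The axioms making the data of `X : SComplexData R` into a genuine S-complex:
the grading is an internal direct sum decomposition into finitely generated free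
pieces, the sign map is `(-1)^i` on the degree `i` piece, the structure maps are
graded of the appropriate degrees (`δ₁` supported on `C_1`, `δ₂` valued in `C_{-2}`),
and the S-complex relations `d∘d = 0`, `δ₁∘d = 0`, `d∘δ₂ = 0`,
`d∘v − v∘d − δ₂∘δ₁ = 0` hold; the latter are equivalent to `d̃ ∘ d̃ = 0` for the
differential `d̃(α, β, r) = (dα, vα − dβ + δ₂ r, δ₁ α)` on `C̃ = C ⊕ C[1] ⊕ R`. -/
structure IsSComplex (X : SComplexData R) : Prop where
  internal : DirectSum.IsInternal X.grading
  free : ∀ i : ℤ, Module.Free R ↥(X.grading i)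
  finite : Module.Finite R X.Tot
  sign_spec : ∀ i : ℤ, ∀ x ∈ X.grading i, X.sign x = if Even i then x else -x
  d_deg : ∀ i : ℤ, (X.grading i).map X.d ≤ X.grading (i - 1)
  v_deg : ∀ i : ℤ, (X.grading i).map X.v ≤ X.grading (i - 2)
  δ₁_deg : ∀ i : ℤ, i ≠ 1 → ∀ x ∈ X.grading i, X.δ₁ x = 0
  δ₂_deg : LinearMap.range X.δ₂ ≤ X.grading (-2)
  d_d : X.d ∘ₗ X.d = 0
  δ₁_d : X.δ₁ ∘ₗ X.d = 0
  d_δ₂ : X.d ∘ₗ X.δ₂ = 0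
  d_v : X.d ∘ₗ X.v - X.v ∘ₗ X.d - X.δ₂ ∘ₗ X.δ₁ = 0

/-- A morphism of S-complexes `λ̃ : C̃ → C̃'`, i.e. a degree-0 chain map
`λ̃(α, β, r) = (λ α, μ α + λ β + Δ₂ r, Δ₁ α + r)`, recorded through its
components `λ, μ, Δ₁, Δ₂` (here `l` stands for `λ`). -/
structure SMorphism (X Y : SComplexData R) where
  l : X.Tot →ₗ[R] Y.Tot
  μ : X.Tot →ₗ[R] Y.Tot
  Δ₁ : X.Tot →ₗ[R] R
  Δ₂ : R →ₗ[R] Y.Tot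
  l_deg : ∀ i : ℤ, (X.grading i).map l ≤ Y.grading i
  μ_deg : ∀ i : ℤ, (X.grading i).map μ ≤ Y.grading (i - 1)
  Δ₁_deg : ∀ i : ℤ, i ≠ 0 → ∀ x ∈ X.grading i, Δ₁ x = 0
  Δ₂_deg : LinearMap.range Δ₂ ≤ Y.grading (-1)
  comm_d : l ∘ₗ X.d = Y.d ∘ₗ l
  comm_δ₁ : Δ₁ ∘ₗ X.d + X.δ₁ = Y.δ₁ ∘ₗ l
  comm_δ₂ : Y.d ∘ₗ Δ₂ + l ∘ₗ X.δ₂ = Y.δ₂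
  comm_v : μ ∘ₗ X.d + Y.d ∘ₗ μ + l ∘ₗ X.v - Y.v ∘ₗ l + Δ₂ ∘ₗ X.δ₁ - Y.δ₂ ∘ₗ Δ₁ = 0

end SComplexData

/-- Functions `ℕ → M` with finitely many nonzero values (i.e. support bounded
above); this realizes the polynomial module `M[x]`. -/
def NatBdd (R : Type u) [CommRing R] (M : Type u) [AddCommGroup M] [Module R M] :
    Submodule R (ℕ → M) where
  carrier := {f | ∃ N : ℕ, ∀ n : ℕ, N < n → f n = 0}
  add_mem' := by
    rintro f g ⟨N, hN⟩ ⟨K, hK⟩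
    refine ⟨max N K, fun n hn => ?_⟩
    have h1 := hN n (lt_of_le_of_lt (le_max_left N K) hn)
    have h2 := hK n (lt_of_le_of_lt (le_max_right N K) hn)
    show f n + g n = 0
    rw [h1, h2, add_zero]
  zero_mem' := ⟨0, fun _ _ => rfl⟩
  smul_mem' := by
    rintro c f ⟨N, hN⟩
    refine ⟨N, fun n hn => ?_⟩
    show c • f n = 0
    rw [hN n hn, smul_zero]

/-- Functions `ℤ → M` with support bounded above; for `M = R` this realizes the
ring `R[[x⁻¹, x]]` of Laurent series with finitely many positive powers of `x`. -/
def IntBdd (R : Type u) [CommRing R] (M : Type u) [AddCommGroup M] [Module R M] :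
    Submodule R (ℤ → M) where
  carrier := {f | ∃ N : ℤ, ∀ n : ℤ, N < n → f n = 0}
  add_mem' := by
    rintro f g ⟨N, hN⟩ ⟨K, hK⟩
    refine ⟨max N K, fun n hn => ?_⟩
    have h1 := hN n (lt_of_le_of_lt (le_max_left N K) hn)
    have h2 := hK n (lt_of_le_of_lt (le_max_right N K) hn)
    show f n + g n = 0
    rw [h1, h2, add_zero]
  zero_mem' := ⟨0, fun _ _ => rfl⟩
  smul_mem' := by
    rintro c f ⟨N, hN⟩
    refine ⟨N, fun n hn => ?_⟩
    show c • f n = 0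
    rw [hN n hn, smul_zero]

/-- The multiplication of `R[[x⁻¹, x]]`, realized as a convolution product on
functions `ℤ → R` with support bounded above. -/
noncomputable def lmul {R : Type u} [CommRing R] (f g : ↥(IntBdd R R)) : ↥(IntBdd R R) :=
  ⟨fun n => ∑ᶠ i : ℤ, f.1 i * g.1 (n - i), by
    obtain ⟨N, hN⟩ := f.2
    obtain ⟨K, hK⟩ := g.2
    refine ⟨N + K, fun n hn => ?_⟩
    apply finsum_eq_zero_of_forall_eq_zero
    intro i
    by_cases h : N < i
    · rw [hN i h, zero_mul]
    · rw [hK (n - i) (by omega), mul_zero]⟩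

namespace SComplexData

variable {R : Type u} [CommRing R]

/-- The carrier of the small equivariant complex `𝔣Ĉ_* = C_{*-1} ⊕ R[x]`,
with `R[x]` realized as finitely supported functions `ℕ → R`. -/
abbrev Small (X : SComplexData R) : Type u := X.Tot × ↥(NatBdd R R)

/-- `Σᵢ vⁱ δ₂(aᵢ)` for a polynomial with coefficients `aᵢ`. -/
noncomputable def sumV (X : SComplexData R) (f : ↥(NatBdd R R)) : X.Tot :=
  ∑ᶠ i : ℕ, (X.v ^ i) (X.δ₂ (f.1 i))

/-- The differential `𝔡̂(α, Σᵢ aᵢxⁱ) = (dα − Σᵢ vⁱδ₂(aᵢ), 0)` of the small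
equivariant complex. -/
noncomputable def smallD (X : SComplexData R) : X.Small → X.Small :=
  fun z => (X.d z.1 - X.sumV z.2, 0)

/-- The `R[x]`-module structure of the small equivariant complex:
`x · (α, p(x)) = (v(α), δ₁(α) + x·p(x))`; this is the action of `x`. -/
noncomputable def xSmall (X : SComplexData R) : X.Small → X.Small :=
  fun z => (X.v z.1, ⟨fun n => if n = 0 then X.δ₁ z.1 else z.2.1 (n - 1), by
    obtain ⟨N, hN⟩ := z.2.2
    refine ⟨N + 1, fun n hn => ?_⟩
    show (if n = 0 then X.δ₁ z.1 else z.2.1 (n - 1)) = 0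
    rw [if_neg (by omega)]
    exact hN (n - 1) (by omega)⟩)

/-- The map `𝔦 : 𝔣Ĉ_* → R[[x⁻¹, x]]`,
`𝔦(α, Σᵢ aᵢxⁱ) = Σ_{i ≤ −1} δ₁v^{−i−1}(α) xⁱ + Σᵢ aᵢxⁱ`. -/
noncomputable def iota (X : SComplexData R) : X.Small → ↥(IntBdd R R) :=
  fun z => ⟨fun n => if n < 0 then X.δ₁ ((X.v ^ (-n - 1).toNat) z.1) else z.2.1 n.toNat, by
    obtain ⟨N, hN⟩ := z.2.2
    refine ⟨(N : ℤ), fun n hn => ?_⟩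
    show (if n < 0 then X.δ₁ ((X.v ^ (-n - 1).toNat) z.1) else z.2.1 n.toNat) = 0
    rw [if_neg (by omega)]
    exact hN n.toNat (by omega)⟩

/-- `𝔍(C̃) = 𝔦(ker 𝔡̂)`, an `R[x]`-submodule of `R[[x⁻¹, x]]`, here recorded
as a set. -/
noncomputable def JJ (X : SComplexData R) : Set ↥(IntBdd R R) :=
  X.iota '' {z | X.smallD z = 0}

/-- `DegEq Q n` means that the Laurent series `Q` is nonzero with `Deg Q = n`,
i.e. `n` is the largest exponent with nonzero coefficient. -/
def DegEq {R : Type u} [CommRing R] (Q : ↥(IntBdd R R)) (n : ℤ) : Prop :=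
  Q.1 n ≠ 0 ∧ ∀ m : ℤ, n < m → Q.1 m = 0

/-- The set of degrees of nonzero elements of `𝔍(C̃)`. -/
noncomputable def degSet (X : SComplexData R) : Set ℤ :=
  {n : ℤ | ∃ Q ∈ X.JJ, DegEq Q n}

/-- The Frøyshov invariant `h(C̃) = −inf {Deg Q : 0 ≠ Q ∈ 𝔍(C̃)}`. -/
noncomputable def hInv (X : SComplexData R) : ℤ := -sInf X.degSet

/-- The ideal `J_i(C̃) = {a ∈ R : ∃ Q = a·x^{−i} + (lower order terms) ∈ 𝔍(C̃)}`,
recorded as a set. -/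
noncomputable def Jideal (X : SComplexData R) (i : ℤ) : Set R :=
  {a : R | ∃ Q ∈ X.JJ, (∀ m : ℤ, -i < m → Q.1 m = 0) ∧ Q.1 (-i) = a}

end SComplexData

namespace SComplexData

open TensorProduct

variable {R : Type u} [CommRing R]

/-- The base change `C̃ ⊗_R S` of an S-complex along an `R`-algebra `S`:
the chain module and all structure maps are tensored with `S`. -/
noncomputable def baseChange (A : SComplexData R) (S : Type u) [CommRing S] [Algebra R S] :
    SComplexData S where
  Tot := S ⊗[R] A.Tot
  grading := fun i => Submodule.baseChange S (A.grading i)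
  sign := A.sign.baseChange S
  d := A.d.baseChange S
  v := A.v.baseChange S
  δ₁ := LinearMap.liftBaseChange S ((Algebra.linearMap R S) ∘ₗ A.δ₁)
  δ₂ := LinearMap.toSpanSingleton S (S ⊗[R] A.Tot) ((1 : S) ⊗ₜ[R] A.δ₂ 1)

end SComplexData

/-!
Base change is extension of scalars on the small equivariant complex, which commutes with
`𝔡̂` and, coefficientwise, with `𝔦`; as `R → K` is injective, a cycle over `R` and its extension
give series of the same degree. Conversely, `K` is a localization of `R`, so a nonzero-divisor
multiple `m • z` of a cycle `z` over `K` is the extension of some `z'` over `R`. The differential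
of `z'` vanishes after localization, hence is killed by another nonzero-divisor `c`, and `c • z'`
is a cycle over `R` whose series is that of `z` times the unit `c m` of `K`. So both sides have the
same set of degrees, for base change along any localization at nonzero-divisors.
-/

namespace NatBdd

variable {R S : Type u} [CommRing R] [CommRing S]

def map (f : R →+* S) (p : ↥(NatBdd R R)) : ↥(NatBdd S S) :=
  ⟨fun n => f (p.1 n), by
    obtain ⟨N, hN⟩ := p.2
    exact ⟨N, fun n hn => by simp only [hN n hn, map_zero]⟩⟩

lemma map_smul (f : R →+* S) (c : R) (p : ↥(NatBdd R R)) : map f (c • p) = f c • map f p :=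
  Subtype.ext (funext fun n => map_mul f c (p.1 n))

lemma exists_map_eq_smul [Algebra R S] (M : Submonoid R) [IsLocalization M S]
    (q : ↥(NatBdd S S)) :
    ∃ (m : M) (p : ↥(NatBdd R R)), map (algebraMap R S) p = algebraMap R S m • q := by
  classical
  obtain ⟨N, hN⟩ := q.2
  obtain ⟨m, hm⟩ := IsLocalization.exist_integer_multiples M (Finset.range (N + 1)) q.1
  choose! a ha using hm
  refine ⟨m, ⟨fun n => if n ≤ N then a n else 0, N, fun n hn => if_neg (not_le.mpr hn)⟩, ?_⟩
  refine Subtype.ext (funext fun n => ?_)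
  change algebraMap R S (if n ≤ N then a n else 0) = algebraMap R S m * q.1 n
  split_ifs with hn
  · exact (ha n (Finset.mem_range_succ_iff.mpr hn)).trans (Algebra.smul_def _ _)
  · rw [map_zero, hN n (not_le.mp hn), mul_zero]

end NatBdd

namespace SComplexData

open TensorProduct

variable {R : Type u} [CommRing R]

lemma degEq_iff_of_forall_eq_zero_iff {S : Type u} [CommRing S] {Q : ↥(IntBdd R R)}
    {Q' : ↥(IntBdd S S)} (h : ∀ m, Q.1 m = 0 ↔ Q'.1 m = 0) (n : ℤ) :
    DegEq Q n ↔ DegEq Q' n := by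
  simp only [DegEq, ne_eq, h]

lemma hasFiniteSupport_sumV (X : SComplexData R) (f : ↥(NatBdd R R)) :
    Function.HasFiniteSupport fun i => (X.v ^ i) (X.δ₂ (f.1 i)) := by
  obtain ⟨N, hN⟩ := f.2
  refine (Set.finite_Iic N).subset fun i hi => ?_
  by_contra hiN
  exact hi (by simp only [hN i (not_le.mp hiN), map_zero])

lemma sumV_smul (X : SComplexData R) (c : R) (f : ↥(NatBdd R R)) :
    X.sumV (c • f) = c • X.sumV f := by
  rw [sumV, sumV, smul_finsum' c (X.hasFiniteSupport_sumV f)]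
  simp only [Submodule.coe_smul, Pi.smul_apply, map_smul]

lemma smallD_smul (X : SComplexData R) (c : R) (z : X.Small) :
    X.smallD (c • z) = c • X.smallD z := by
  refine Prod.ext ?_ (smul_zero c).symm
  simp only [smallD, Prod.smul_fst, Prod.smul_snd, map_smul, sumV_smul, smul_sub]

lemma iota_smul_apply (X : SComplexData R) (c : R) (z : X.Small) (m : ℤ) :
    (X.iota (c • z)).1 m = c * (X.iota z).1 m := by
  simp only [iota, Prod.smul_fst, Prod.smul_snd, map_smul, Submodule.coe_smul, Pi.smul_apply,
    smul_eq_mul]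
  split_ifs <;> rfl

variable {S : Type u} [CommRing S] [Algebra R S] (A : SComplexData R)

lemma baseChange_v_pow_tmul (i : ℕ) (x : A.Tot) :
    ((A.baseChange S).v ^ i) ((1 : S) ⊗ₜ[R] x) = (1 : S) ⊗ₜ[R] ((A.v ^ i) x) := by
  change (A.v.baseChange S ^ i) _ = _
  rw [← LinearMap.baseChange_pow, LinearMap.baseChange_tmul]

lemma baseChange_δ₁_tmul (x : A.Tot) :
    (A.baseChange S).δ₁ ((1 : S) ⊗ₜ[R] x) = algebraMap R S (A.δ₁ x) := by
  change LinearMap.liftBaseChange S _ _ = _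
  rw [LinearMap.liftBaseChange_tmul, one_smul]
  rfl

lemma baseChange_δ₂_algebraMap (r : R) :
    (A.baseChange S).δ₂ (algebraMap R S r) = (1 : S) ⊗ₜ[R] A.δ₂ r := by
  change LinearMap.toSpanSingleton S (S ⊗[R] A.Tot) ((1 : S) ⊗ₜ[R] A.δ₂ 1) _ = _
  rw [LinearMap.toSpanSingleton_apply, algebraMap_smul, ← tmul_smul, ← map_smul, smul_eq_mul,
    mul_one]

lemma sumV_baseChange (f : ↥(NatBdd R R)) :
    (A.baseChange S).sumV (NatBdd.map (algebraMap R S) f) = (1 : S) ⊗ₜ[R] A.sumV f := by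
  have h := map_finsum (TensorProduct.mk R S A.Tot 1) (A.hasFiniteSupport_sumV f)
  rw [mk_apply] at h
  rw [sumV, sumV, h]
  refine finsum_congr fun i => ?_
  rw [mk_apply, ← baseChange_v_pow_tmul, ← baseChange_δ₂_algebraMap]
  rfl

variable (S) in
noncomputable def toBaseChange (z : A.Small) : (A.baseChange S).Small :=
  ((1 : S) ⊗ₜ[R] z.1, NatBdd.map (algebraMap R S) z.2)

lemma toBaseChange_smul (c : R) (z : A.Small) :
    A.toBaseChange S (c • z) = algebraMap R S c • A.toBaseChange S z := by
  refine Prod.ext ?_ (NatBdd.map_smul _ c z.2)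
  change (1 : S) ⊗ₜ[R] (c • z.1) = algebraMap R S c • (1 : S) ⊗ₜ[R] z.1
  rw [tmul_smul, algebraMap_smul]

lemma toBaseChange_zero : A.toBaseChange S 0 = 0 := by
  simpa only [zero_smul, map_zero] using A.toBaseChange_smul (S := S) 0 0

lemma smallD_toBaseChange (z : A.Small) :
    (A.baseChange S).smallD (A.toBaseChange S z) = A.toBaseChange S (A.smallD z) := by
  refine Prod.ext ?_ (Subtype.ext (funext fun n => (map_zero (algebraMap R S)).symm))
  change (A.baseChange S).d ((1 : S) ⊗ₜ[R] z.1) - (A.baseChange S).sumV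
    (NatBdd.map (algebraMap R S) z.2) = ((1 : S) ⊗ₜ[R] (A.d z.1 - A.sumV z.2) : S ⊗[R] A.Tot)
  rw [sumV_baseChange, tmul_sub]
  rfl

lemma iota_toBaseChange_apply (z : A.Small) (m : ℤ) :
    ((A.baseChange S).iota (A.toBaseChange S z)).1 m = algebraMap R S ((A.iota z).1 m) := by
  simp only [iota, toBaseChange]
  split_ifs
  · rw [baseChange_v_pow_tmul, baseChange_δ₁_tmul]
  · rfl

lemma iota_toBaseChange_apply_eq_zero_iff (hinj : Function.Injective (algebraMap R S))
    (z : A.Small) (m : ℤ) :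
    ((A.baseChange S).iota (A.toBaseChange S z)).1 m = 0 ↔ (A.iota z).1 m = 0 := by
  rw [iota_toBaseChange_apply, map_eq_zero_iff _ hinj]

variable (M : Submonoid R) [IsLocalization M S]

lemma exists_toBaseChange_eq_smul (z : (A.baseChange S).Small) :
    ∃ (m : M) (z' : A.Small), A.toBaseChange S z' = algebraMap R S m • z := by
  obtain ⟨β, q⟩ := z
  change S ⊗[R] A.Tot at β
  obtain ⟨⟨x, s⟩, hx⟩ := IsLocalizedModule.surj M (TensorProduct.mk R S A.Tot 1) β
  obtain ⟨m, p, hp⟩ := NatBdd.exists_map_eq_smul M q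
  refine ⟨s * m, (m • x, s • p), Prod.ext ?_ ?_⟩
  · change (1 : S) ⊗ₜ[R] ((m : R) • x) = (algebraMap R S (s * m) • β : S ⊗[R] A.Tot)
    rw [tmul_smul, ← mk_apply, ← hx, Submonoid.smul_def, smul_smul, mul_comm,
      ← algebraMap_smul S]
  · change NatBdd.map (algebraMap R S) ((s : R) • p) = algebraMap R S (s * m) • q
    rw [NatBdd.map_smul, hp, smul_smul, ← map_mul]

lemma exists_toBaseChange_eq_smul_of_smallD_eq_zero {z : (A.baseChange S).Small}
    (hz : (A.baseChange S).smallD z = 0) :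
    ∃ (m : M) (z' : A.Small), A.smallD z' = 0 ∧ A.toBaseChange S z' = algebraMap R S m • z := by
  obtain ⟨m, z', hz'⟩ := A.exists_toBaseChange_eq_smul M z
  have hlocal : TensorProduct.mk R S A.Tot 1 (A.smallD z').1 = 0 := by
    have h := congrArg Prod.fst (A.smallD_toBaseChange (S := S) z')
    rw [hz', smallD_smul, hz, smul_zero] at h
    exact h.symm
  obtain ⟨c, hc⟩ := (IsLocalizedModule.eq_zero_iff M _).mp hlocal
  refine ⟨c * m, (c : R) • z', ?_, ?_⟩
  · rw [smallD_smul]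
    exact Prod.ext hc (smul_zero _)
  · rw [toBaseChange_smul, hz', smul_smul, ← map_mul]
    rfl

theorem degSet_baseChange_of_isLocalization (hM : M ≤ nonZeroDivisors R) :
    (A.baseChange S).degSet = A.degSet := by
  have hinj := IsLocalization.injective S hM
  ext n
  constructor
  · rintro ⟨_, ⟨z, hz, rfl⟩, hdeg⟩
    obtain ⟨m, z', hz', hm⟩ := A.exists_toBaseChange_eq_smul_of_smallD_eq_zero M hz
    refine ⟨_, ⟨z', hz', rfl⟩, (degEq_iff_of_forall_eq_zero_iff (fun k => ?_) n).mp hdeg⟩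
    rw [← A.iota_toBaseChange_apply_eq_zero_iff hinj, hm, iota_smul_apply,
      (IsLocalization.map_units S m).mul_right_eq_zero]
  · rintro ⟨_, ⟨z, hz : A.smallD z = 0, rfl⟩, hdeg⟩
    have hz' : (A.baseChange S).smallD (A.toBaseChange S z) = 0 := by
      rw [smallD_toBaseChange, hz, toBaseChange_zero]
    refine ⟨_, ⟨A.toBaseChange S z, hz', rfl⟩,
      (degEq_iff_of_forall_eq_zero_iff (fun k => ?_) n).mp hdeg⟩
    exact (A.iota_toBaseChange_apply_eq_zero_iff hinj z k).symm

end SComplexData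

open SComplexData in
theorem statement19_general {R K : Type u} [CommRing R]
    [Field K] [Algebra R K] [IsFractionRing R K]
    (A : SComplexData R) :
    (A.baseChange K).hInv = A.hInv :=
  congrArg (fun s => -sInf s) (A.degSet_baseChange_of_isLocalization (nonZeroDivisors R) le_rfl)

open SComplexData in
/-- **Statement 19.** For an S-complex over an integral domain `R` with field of
fractions `K`, the Frøyshov invariant is unchanged under base change to `K`:
`h(C̃ ⊗_R K) = h(C̃)`. -/
theorem statement19 {R K : Type u} [CommRing R] [IsDomain R]
    [Field K] [Algebra R K] [IsFractionRing R K]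
    (A : SComplexData R) (hA : A.IsSComplex) :
    (A.baseChange K).hInv = A.hInv :=
  statement19_general A
end
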